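/- arXiv:1312.3389 — 6 statements merged into one kernel-verified Lean document; each statement's English description precedes it below -/
import Mathlib

section
/- Let R be a finite local commutative ring and A an m × l matrix over R whose rows are linearly independent (full-row-rank). Then m ≤ l and there exists an invertible l × l matrix P over R such that AP = (I_m | 0), the m × l matrix consisting of the m × m identity followed by zero columns. -/
open Matrix BigOperators

variable {R : Type*}

def FRR [CommRing R] {m l : ℕ} (A : Matrix (Fin m) (Fin l) R) : Prop :=
  ∀ b : Fin m → R, Matrix.vecMul b A = 0 → b = 0

def perpCode [CommRing R] {N : ℕ} (C : Submodule R (Fin N → R)) : Submodule R (Fin N → R) where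
  carrier := {x | ∀ c ∈ C, x ⬝ᵥ c = 0}
  add_mem' := by
    intro a b ha hb c hc
    simp [add_dotProduct, ha c hc, hb c hc]
  zero_mem' := by
    intro c hc
    simp
  smul_mem' := by
    intro r x hx c hc
    simp [smul_dotProduct, hx c hc]

def IsFrobenius (R : Type*) [CommRing R] : Prop :=
  ∀ (N : ℕ) (C : Submodule R (Fin N → R)), perpCode (perpCode C) = C

def wtv [Zero R] [DecidableEq R] {n : ℕ} (v : Fin n → R) : ℕ :=
  (Finset.univ.filter fun i => v i ≠ 0).card

open scoped Classical in
noncomputable def minDistW [CommRing R] (w : R → ℕ) {n : ℕ} (C : Set (Fin n → R)) : ℕ :=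
  if ∃ x ∈ C, ∃ y ∈ C, x ≠ y then
    sInf {d | ∃ x ∈ C, ∃ y ∈ C, x ≠ y ∧ (∑ i, w (x i - y i)) = d}
  else n + 1

noncomputable def dHv [CommRing R] [DecidableEq R] {n : ℕ} (C : Set (Fin n → R)) : ℕ :=
  minDistW (fun r => if r = 0 then 0 else 1) C

open scoped Classical in
noncomputable def minDistWM [CommRing R] (w : R → ℕ) {n l : ℕ}
    (C : Set (Matrix (Fin n) (Fin l) R)) : ℕ :=
  if ∃ x ∈ C, ∃ y ∈ C, x ≠ y then
    sInf {d | ∃ x ∈ C, ∃ y ∈ C, x ≠ y ∧ (∑ i, ∑ j, w (x i j - y i j)) = d}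
  else n * l + 1

noncomputable def dHM [CommRing R] [DecidableEq R] {n l : ℕ} (C : Set (Matrix (Fin n) (Fin l) R)) : ℕ :=
  minDistWM (fun r => if r = 0 then 0 else 1) C

def MPC [CommRing R] {n m l : ℕ} (C : Fin m → Set (Fin n → R)) (A : Matrix (Fin m) (Fin l) R) :
    Set (Matrix (Fin n) (Fin l) R) :=
  {x | ∃ c : Fin m → Fin n → R, (∀ j, c j ∈ C j) ∧ x = Matrix.of fun i k => ∑ j, c j i * A j k}

def dualM [CommRing R] {n l : ℕ} (C : Set (Matrix (Fin n) (Fin l) R)) : Set (Matrix (Fin n) (Fin l) R) :=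
  {x | ∀ c ∈ C, ∑ i, ∑ j, x i j * c i j = 0}

def dualV [CommRing R] {n : ℕ} (C : Set (Fin n → R)) : Set (Fin n → R) :=
  {x | ∀ c ∈ C, x ⬝ᵥ c = 0}


-- auxiliary lemmas
section Aux
variable [CommRing R]
lemma frr_mul_unit {m l : ℕ} (A : Matrix (Fin m) (Fin l) R) (P : Matrix (Fin l) (Fin l) R)
    (hA : FRR A) (hP : IsUnit P) : FRR (A * P) := by
  intro b hb
  apply hA
  obtain ⟨v, hv⟩ := hP
  have h1 : Matrix.vecMul (Matrix.vecMul b A) P = 0 := by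
    rw [Matrix.vecMul_vecMul, hb]
  have h2 : Matrix.vecMul (Matrix.vecMul (Matrix.vecMul b A) P) (↑v⁻¹ : Matrix (Fin l) (Fin l) R) = 0 := by
    rw [h1, Matrix.zero_vecMul]
  rwa [Matrix.vecMul_vecMul, ← hv, Units.mul_inv, Matrix.vecMul_one] at h2

-- extension of a matrix by identity block in top-left corner
def extMat {n : ℕ} (X : Matrix (Fin n) (Fin n) R) : Matrix (Fin (n+1)) (Fin (n+1)) R :=
  Matrix.of fun j k =>
    Fin.cases (Fin.cases (1:R) (fun _ => 0) k) (fun j' => Fin.cases 0 (fun k' => X j' k') k) j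

@[simp] lemma extMat_00 {n : ℕ} (X : Matrix (Fin n) (Fin n) R) : extMat X 0 0 = 1 := rfl
@[simp] lemma extMat_0s {n : ℕ} (X : Matrix (Fin n) (Fin n) R) (k : Fin n) :
    extMat X 0 k.succ = 0 := by simp [extMat]
@[simp] lemma extMat_s0 {n : ℕ} (X : Matrix (Fin n) (Fin n) R) (j : Fin n) :
    extMat X j.succ 0 = 0 := by simp [extMat]
@[simp] lemma extMat_ss {n : ℕ} (X : Matrix (Fin n) (Fin n) R) (j k : Fin n) :
    extMat X j.succ k.succ = X j k := by simp [extMat]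

lemma extMat_mul {n : ℕ} (X Y : Matrix (Fin n) (Fin n) R) :
    extMat X * extMat Y = extMat (X * Y) := by
  ext j k
  rw [Matrix.mul_apply, Fin.sum_univ_succ]
  induction j using Fin.cases with
  | zero =>
    induction k using Fin.cases with
    | zero => simp
    | succ k => simp
  | succ j =>
    induction k using Fin.cases with
    | zero => simp
    | succ k => simp [Matrix.mul_apply]

lemma extMat_one {n : ℕ} : extMat (1 : Matrix (Fin n) (Fin n) R) = 1 := by
  ext j k
  induction j using Fin.cases with
  | zero =>
    induction k using Fin.cases with
    | zero => simp [Matrix.one_apply]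
    | succ k => simp [Matrix.one_apply, (Fin.succ_ne_zero k).symm]
  | succ j =>
    induction k using Fin.cases with
    | zero => simp [Matrix.one_apply, Fin.succ_ne_zero j]
    | succ k => simp [Matrix.one_apply, Fin.succ_inj]

lemma isUnit_extMat {n : ℕ} (X : Matrix (Fin n) (Fin n) R) (h : IsUnit X) :
    IsUnit (extMat X) := by
  obtain ⟨v, hv⟩ := h
  refine ⟨⟨extMat X, extMat (↑v⁻¹ : Matrix (Fin n) (Fin n) R), ?_, ?_⟩, rfl⟩
  · rw [extMat_mul, ← hv, Units.mul_inv, extMat_one]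
  · rw [extMat_mul, ← hv, Units.inv_mul, extMat_one]

open scoped Classical in
lemma exists_ann [Fintype R] [IsLocalRing R] :
    ∃ x : R, x ≠ 0 ∧ ∀ y ∈ IsLocalRing.maximalIdeal R, x * y = 0 := by
  have hnil : IsNilpotent (IsLocalRing.maximalIdeal R) := by
    rw [← IsLocalRing.jacobson_eq_maximalIdeal (⊥ : Ideal R) bot_ne_top]
    exact IsArtinianRing.isNilpotent_jacobson_bot
  have hex : ∃ n, (IsLocalRing.maximalIdeal R) ^ n = ⊥ := hnil
  set k := Nat.find hex with hk
  have hkz : (IsLocalRing.maximalIdeal R) ^ k = ⊥ := Nat.find_spec hex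
  have hkpos : k ≠ 0 := by
    intro h0
    rw [h0, pow_zero] at hkz
    exact (one_ne_zero : (1 : Ideal R) ≠ 0) (by simpa using hkz)
  have hlt : (IsLocalRing.maximalIdeal R) ^ (k - 1) ≠ ⊥ :=
    Nat.find_min hex (by omega)
  obtain ⟨x, hx, hx0⟩ := Submodule.exists_mem_ne_zero_of_ne_bot hlt
  refine ⟨x, hx0, fun y hy => ?_⟩
  have : x * y ∈ (IsLocalRing.maximalIdeal R) ^ k := by
    have : x * y ∈ (IsLocalRing.maximalIdeal R) ^ (k - 1) * IsLocalRing.maximalIdeal R :=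
      Ideal.mul_mem_mul hx hy
    rwa [← pow_succ, Nat.sub_add_cancel (by omega)] at this
  simpa [hkz] using this

lemma isUnit_one_add_sq_zero {n : Type*} [Fintype n] [DecidableEq n] (N : Matrix n n R)
    (h : N * N = 0) : IsUnit (1 + N) := by
  refine ⟨⟨1 + N, 1 - N, ?_, ?_⟩, rfl⟩
  · have : (1 + N) * (1 - N) = 1 - N * N := by noncomm_ring
    rw [this, h, sub_zero]
  · have : (1 - N) * (1 + N) = 1 - N * N := by noncomm_ring
    rw [this, h, sub_zero]

lemma main_aux [Fintype R] [IsLocalRing R] : ∀ (m l : ℕ) (A : Matrix (Fin m) (Fin l) R), FRR A →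
    m ≤ l ∧ ∃ P : Matrix (Fin l) (Fin l) R, IsUnit P ∧
      A * P = Matrix.of fun (i : Fin m) (j : Fin l) => if (j : ℕ) = (i : ℕ) then (1:R) else 0 := by
  intro m
  induction m with
  | zero =>
    intro l A _
    exact ⟨Nat.zero_le _, 1, isUnit_one, by ext i j; exact i.elim0⟩
  | succ m ih =>
    intro l A hA
    -- Step 1: row 0 has a unit entry
    have hexu : ∃ j, IsUnit (A 0 j) := by
      by_contra hcon
      push_neg at hcon
      obtain ⟨x, hx0, hxm⟩ := exists_ann (R := R)
      have hb : (fun i : Fin (m+1) => if i = 0 then x else 0) = 0 := by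
        apply hA
        funext j
        have : Matrix.vecMul (fun i : Fin (m+1) => if i = 0 then x else 0) A j
            = ∑ i, (if i = 0 then x else 0) * A i j := rfl
        rw [this]
        rw [Finset.sum_eq_single 0]
        · simp only [if_pos rfl]
          apply hxm
          rw [IsLocalRing.mem_maximalIdeal]
          exact hcon j
        · intro c _ hc; simp [hc]
        · intro h; simp at h
      have := congrFun hb 0
      simp at this
      exact hx0 this
    obtain ⟨j₀, hj₀⟩ := hexu
    obtain ⟨l', rfl⟩ : ∃ l', l = l' + 1 := ⟨l - 1, by have := j₀.pos; omega⟩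
    set u := hj₀.unit with hu
    have huval : (↑u : R) = A 0 j₀ := rfl
    -- Step 2: P1 = D * (1 + N) * S makes row 0 of A*P1 equal to e₀
    set d : Fin (l'+1) → R := Function.update (fun _ => (1:R)) j₀ (↑u⁻¹ : R) with hd
    set D : Matrix (Fin (l'+1)) (Fin (l'+1)) R := Matrix.diagonal d with hD
    have hDu : IsUnit D := by
      rw [hD, Matrix.isUnit_diagonal]
      refine ⟨⟨d, Function.update (fun _ => (1:R)) j₀ (↑u : R), ?_, ?_⟩, rfl⟩ <;>
      · funext i
        by_cases hi : i = j₀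
        · subst hi
          simp [hd, Pi.mul_apply, Function.update_self]
        · simp [hd, Pi.mul_apply, Function.update_of_ne hi]
    set N : Matrix (Fin (l'+1)) (Fin (l'+1)) R :=
      Matrix.of (fun j k => if j = j₀ ∧ k ≠ j₀ then -(A 0 k) else 0) with hN
    have hNN : N * N = 0 := by
      ext a b
      rw [Matrix.mul_apply]
      rw [show (0 : Matrix (Fin (l'+1)) (Fin (l'+1)) R) a b = 0 from rfl]
      apply Finset.sum_eq_zero
      intro c _
      by_cases hc : c = j₀
      · subst hc; simp [hN]
      · have : N c b = 0 := by simp [hN, hc]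
        rw [this, mul_zero]
    have hNu : IsUnit (1 + N) := isUnit_one_add_sq_zero N hNN
    set σ := Equiv.swap (0 : Fin (l'+1)) j₀ with hσ
    set S : Matrix (Fin (l'+1)) (Fin (l'+1)) R :=
      Matrix.of (fun j k => if j = σ k then (1:R) else 0) with hS
    have hMS : ∀ (M : Matrix (Fin (m+1)) (Fin (l'+1)) R) i k, (M * S) i k = M i (σ k) := by
      intro M i k
      rw [Matrix.mul_apply]
      simp only [hS, Matrix.of_apply, mul_ite, mul_one, mul_zero]
      rw [Finset.sum_ite_eq' Finset.univ (σ k) (fun c => M i c)]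
      simp
    have hSS : S * S = 1 := by
      ext a b
      rw [Matrix.mul_apply]
      have hcond : ∀ x : Fin (l'+1), (a = σ x) ↔ (x = σ a) := by
        intro x
        constructor
        · intro h; rw [h, hσ, Equiv.swap_apply_self]
        · intro h; rw [h, hσ, Equiv.swap_apply_self]
      simp only [hS, Matrix.of_apply, ite_mul, one_mul, zero_mul, hcond]
      rw [Finset.sum_ite_eq' Finset.univ (σ a) (fun c => if c = σ b then (1:R) else 0)]
      simp only [Finset.mem_univ, if_pos, Matrix.one_apply]
      congr 1
      simp only [eq_iff_iff]
      exact ⟨fun h => σ.injective h, fun h => by rw [h]⟩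
    -- Step 2b: compute A * (D * (1+N)) and then row 0 of A1
    set AD : Matrix (Fin (m+1)) (Fin (l'+1)) R := A * D with hADdef
    have hAD : ∀ i k, AD i k = A i k * d k := by
      intro i k
      rw [hADdef, hD, Matrix.mul_diagonal]
    set B1 : Matrix (Fin (m+1)) (Fin (l'+1)) R := AD * (1 + N) with hB1def
    have hB1 : ∀ i k, B1 i k = AD i k + AD i j₀ * N j₀ k := by
      intro i k
      rw [hB1def, Matrix.mul_add, Matrix.mul_one, Matrix.add_apply, Matrix.mul_apply]
      congr 1
      rw [Finset.sum_eq_single j₀]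
      · intro c _ hc
        have : N c k = 0 := by simp [hN, hc]
        rw [this, mul_zero]
      · intro h; simp at h
    have hrow0 : ∀ k, B1 0 k = if k = j₀ then 1 else 0 := by
      intro k
      have h3 : d j₀ = (↑u⁻¹ : R) := by rw [hd]; exact Function.update_self _ _ _
      rw [hB1, hAD, hAD]
      by_cases hk : k = j₀
      · rw [if_pos hk, hk]
        have h1 : N j₀ j₀ = 0 := by simp [hN]
        rw [h1, mul_zero, add_zero, h3, ← huval, Units.mul_inv]
      · have h1 : N j₀ k = -(A 0 k) := by simp [hN, hk]
        have h2 : d k = 1 := by rw [hd]; exact Function.update_of_ne hk _ _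
        rw [if_neg hk, h1, h2, h3, mul_one, ← huval, Units.mul_inv, one_mul]
        ring
    set A1 : Matrix (Fin (m+1)) (Fin (l'+1)) R := B1 * S with hA1def
    have hA1row0 : ∀ k, A1 0 k = if k = 0 then 1 else 0 := by
      intro k
      rw [hA1def, hMS, hrow0]
      have : (σ k = j₀) ↔ (k = 0) := by
        rw [show j₀ = σ 0 by rw [hσ, Equiv.swap_apply_left]]
        exact Equiv.apply_eq_iff_eq σ
      simp only [this]
    set P1 : Matrix (Fin (l'+1)) (Fin (l'+1)) R := D * (1 + N) * S with hP1def
    have hSu : IsUnit S := ⟨⟨S, S, hSS, hSS⟩, rfl⟩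
    have hP1u : IsUnit P1 := (hDu.mul hNu).mul hSu
    have hA1P : A1 = A * P1 := by
      rw [hA1def, hB1def, hADdef, hP1def]
      simp [Matrix.mul_assoc]
    have hA1frr : FRR A1 := by
      rw [hA1P]; exact frr_mul_unit A P1 hA hP1u
    -- Step 3: the submatrix B is FRR; apply the induction hypothesis
    set B : Matrix (Fin m) (Fin l') R := Matrix.of (fun i j => A1 i.succ j.succ) with hBdef
    have hBfrr : FRR B := by
      intro b hb
      have hb' : Matrix.vecMul
          (Fin.cons (-(∑ i, b i * A1 i.succ 0)) b : Fin (m+1) → R) A1 = 0 := by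
        funext k
        have hexp : Matrix.vecMul (Fin.cons (-(∑ i, b i * A1 i.succ 0)) b : Fin (m+1) → R) A1 k
            = ∑ i, (Fin.cons (-(∑ i, b i * A1 i.succ 0)) b : Fin (m+1) → R) i * A1 i k := rfl
        rw [hexp, Fin.sum_univ_succ]
        simp only [Fin.cons_zero, Fin.cons_succ, Pi.zero_apply]
        induction k using Fin.cases with
        | zero =>
          rw [hA1row0 0, if_pos rfl]
          ring
        | succ k' =>
          rw [hA1row0 k'.succ, if_neg (Fin.succ_ne_zero k'), mul_zero, zero_add]
          exact congrFun hb k'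
      have hz := hA1frr _ hb'
      funext i
      have := congrFun hz i.succ
      simpa [Fin.cons_succ] using this
    obtain ⟨hml, P', hP'u, hBP'⟩ := ih l' B hBfrr
    refine ⟨by omega, ?_⟩
    set P2 : Matrix (Fin (l'+1)) (Fin (l'+1)) R := extMat P' with hP2def
    have hP2u : IsUnit P2 := isUnit_extMat P' hP'u
    set A2 : Matrix (Fin (m+1)) (Fin (l'+1)) R := A1 * P2 with hA2def
    have hA2row0 : ∀ k, A2 0 k = if k = 0 then 1 else 0 := by
      intro k
      rw [hA2def, Matrix.mul_apply, Fin.sum_univ_succ]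
      simp only [hA1row0, if_pos rfl, Fin.succ_ne_zero, if_neg, one_mul, zero_mul,
        Finset.sum_const_zero, add_zero, if_false]
      induction k using Fin.cases with
      | zero => simp [hP2def]
      | succ k' => simp [hP2def, Fin.succ_ne_zero]
    have hA2s0 : ∀ i : Fin m, A2 i.succ 0 = A1 i.succ 0 := by
      intro i
      rw [hA2def, Matrix.mul_apply, Fin.sum_univ_succ]
      simp [hP2def]
    have hA2ss : ∀ (i : Fin m) (k : Fin l'),
        A2 i.succ k.succ = if (k : ℕ) = (i : ℕ) then 1 else 0 := by
      intro i k
      rw [hA2def, Matrix.mul_apply, Fin.sum_univ_succ]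
      simp only [hP2def, extMat_0s, extMat_ss, mul_zero, zero_add]
      have := congrFun (congrFun hBP' i) k
      rw [Matrix.mul_apply] at this
      exact this
    -- Step 4: clear the first column
    set w : Fin (l'+1) → R := fun k => Fin.cases 0
      (fun k' => if h : (k' : ℕ) < m then -(A2 (Fin.succ ⟨(k' : ℕ), h⟩) 0) else 0) k with hwdef
    have hw0 : w 0 = 0 := rfl
    set N3 : Matrix (Fin (l'+1)) (Fin (l'+1)) R :=
      Matrix.of (fun j k => if k = 0 then w j else 0) with hN3def
    have hN3sq : N3 * N3 = 0 := by
      ext a b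
      rw [Matrix.mul_apply]
      rw [show (0 : Matrix (Fin (l'+1)) (Fin (l'+1)) R) a b = 0 from rfl]
      apply Finset.sum_eq_zero
      intro c _
      by_cases hc : c = 0
      · subst hc
        have : N3 0 b = 0 := by
          simp only [hN3def, Matrix.of_apply, hw0]
          split <;> rfl
        rw [this, mul_zero]
      · have : N3 a c = 0 := by simp [hN3def, hc]
        rw [this, zero_mul]
    have hP3u : IsUnit (1 + N3) := isUnit_one_add_sq_zero N3 hN3sq
    refine ⟨P1 * (P2 * (1 + N3)), hP1u.mul (hP2u.mul hP3u), ?_⟩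
    have hassoc : A * (P1 * (P2 * (1 + N3))) = A2 * (1 + N3) := by
      rw [hA2def, hA1P]
      simp [Matrix.mul_assoc]
    rw [hassoc]
    -- compute A2 * (1 + N3)
    have hmulN3 : ∀ (j : Fin (m+1)) (k : Fin (l'+1)),
        (A2 * N3) j k = if k = 0 then ∑ c, A2 j c * w c else 0 := by
      intro j k
      rw [Matrix.mul_apply]
      by_cases hk : k = 0
      · subst hk
        rw [if_pos rfl]
        refine Finset.sum_congr rfl fun c _ => by simp [hN3def]
      · rw [if_neg hk]
        apply Finset.sum_eq_zero
        intro c _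
        simp [hN3def, hk]
    have hsum0 : (∑ c, A2 0 c * w c) = 0 := by
      rw [Fin.sum_univ_succ, hw0, mul_zero, zero_add]
      apply Finset.sum_eq_zero
      intro c _
      rw [hA2row0, if_neg (Fin.succ_ne_zero c), zero_mul]
    have hsums : ∀ i : Fin m, (∑ c, A2 i.succ c * w c) = -(A2 i.succ 0) := by
      intro i
      have hil : (i : ℕ) < l' := lt_of_lt_of_le i.isLt hml
      rw [Fin.sum_univ_succ, hw0, mul_zero, zero_add]
      have hconv : ∀ c : Fin l', A2 i.succ c.succ * w c.succ
          = if c = (⟨(i : ℕ), hil⟩ : Fin l') then w c.succ else 0 := by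
        intro c
        rw [hA2ss]
        by_cases hc : (c : ℕ) = (i : ℕ)
        · rw [if_pos hc, one_mul, if_pos (Fin.ext hc)]
        · rw [if_neg hc, zero_mul, if_neg (fun h => hc (by rw [h]))]
      simp only [hconv]
      rw [Finset.sum_ite_eq' Finset.univ (⟨(i : ℕ), hil⟩ : Fin l') (fun c => w c.succ)]
      rw [if_pos (Finset.mem_univ _)]
      show (Fin.cases 0
        (fun k' => if h : (k' : ℕ) < m then -(A2 (Fin.succ ⟨(k' : ℕ), h⟩) 0) else 0)
        ((⟨(i : ℕ), hil⟩ : Fin l').succ) : R) = -(A2 i.succ 0)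
      rw [Fin.cases_succ]
      rw [dif_pos (show ((⟨(i : ℕ), hil⟩ : Fin l') : ℕ) < m from i.isLt)]
    ext j k
    rw [Matrix.mul_add, Matrix.mul_one, Matrix.add_apply, hmulN3]
    induction j using Fin.cases with
    | zero =>
      induction k using Fin.cases with
      | zero =>
        rw [if_pos rfl, hsum0, add_zero, hA2row0, if_pos rfl]
        simp
      | succ k' =>
        rw [if_neg (Fin.succ_ne_zero k'), add_zero, hA2row0, if_neg (Fin.succ_ne_zero k')]
        simp [Fin.succ_ne_zero, (Fin.succ_ne_zero k')]
    | succ i =>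
      induction k using Fin.cases with
      | zero =>
        rw [if_pos rfl, hsums i, add_neg_cancel]
        have : ((0 : Fin (l'+1)) : ℕ) ≠ ((i.succ : Fin (m+1)) : ℕ) := by
          simp [Fin.val_succ]
        simp [this]
      | succ k' =>
        rw [if_neg (Fin.succ_ne_zero k'), add_zero, hA2ss]
        have : (((k'.succ : Fin (l'+1))) : ℕ) = ((i.succ : Fin (m+1)) : ℕ) ↔ (k' : ℕ) = (i : ℕ) := by
          simp [Fin.val_succ]
        simp only [Matrix.of_apply, this]

end Aux

theorem stmt1 [CommRing R] [Fintype R] [IsLocalRing R] {m l : ℕ}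
    (A : Matrix (Fin m) (Fin l) R) (hA : FRR A) :
    m ≤ l ∧ ∃ P : Matrix (Fin l) (Fin l) R, IsUnit P ∧
      A * P = Matrix.of fun (i : Fin m) (j : Fin l) => if (j : ℕ) = (i : ℕ) then (1 : R) else 0 := by
  exact main_aux m l A hA
end

section
/- Let R be a finite commutative ring and A an m × l matrix over R. Then A is full-row-rank (its rows are linearly independent) if and only if A is right-invertible, i.e., there exists an l × m matrix B over R with AB = I_m. -/
open Matrix BigOperators

variable {R : Type*}

lemma exists_idem_pow {M : Type*} [CommMonoid M] [Finite M] (x : M) :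
    ∃ t : ℕ, 1 ≤ t ∧ x ^ t * x ^ t = x ^ t := by
  obtain ⟨a, b, hab, h⟩ := Finite.exists_ne_map_eq_of_infinite (fun n : ℕ => x ^ (n + 1))
  wlog hlt : a < b generalizing a b
  · exact this b a hab.symm h.symm (by omega)
  set d := b - a with hd
  have hd1 : 1 ≤ d := by omega
  have key : ∀ n, a + 1 ≤ n → x ^ (n + d) = x ^ n := by
    intro n hn
    have h1 : n + d = (b + 1) + (n - (a + 1)) := by omega
    have h2 : n = (a + 1) + (n - (a + 1)) := by omega
    rw [h1, pow_add, ← h]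
    conv_rhs => rw [h2, pow_add]
  have key2 : ∀ k n, a + 1 ≤ n → x ^ (n + k * d) = x ^ n := by
    intro k
    induction k with
    | zero => simp
    | succ k ih =>
      intro n hn
      have h3 : n + (k + 1) * d = (n + d) + k * d := by ring
      rw [h3, ih (n + d) (by omega), key n hn]
  refine ⟨(a + 1) * d, by nlinarith, ?_⟩
  rw [← pow_add]
  exact key2 (a + 1) ((a + 1) * d) (by nlinarith)

universe u

open scoped Classical in
lemma exists_ann_aux (n : ℕ) : ∀ (R : Type u) [CommRing R] [Fintype R],
    Fintype.card R = n → ∀ (I : Ideal R), I.IsMaximal →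
    ∃ s : R, s ≠ 0 ∧ ∀ x ∈ I, s * x = 0 := by
  induction n using Nat.strong_induction_on with
  | _ n ih =>
    intro R _ _ hcard I hI
    by_cases he : ∃ e : R, e * e = e ∧ e ∈ I ∧ e ≠ 0
    · obtain ⟨e, hee, heI, he0⟩ := he
      set J := Ideal.span ({e} : Set R) with hJ
      have hJI : J ≤ I := Ideal.span_le.mpr (by simpa using heI)
      have hfin : Finite (R ⧸ J) := Quotient.finite _
      have : Fintype (R ⧸ J) := Fintype.ofFinite _
      have hsurj := Ideal.Quotient.mk_surjective (I := J)
      have hlt : Fintype.card (R ⧸ J) < n := by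
        rw [← hcard]
        apply Fintype.card_lt_of_surjective_not_injective _ hsurj
        intro hinj
        apply he0
        apply hinj
        rw [_root_.map_zero, Ideal.Quotient.eq_zero_iff_mem]
        exact Ideal.subset_span rfl
      have hmapne : I.map (Ideal.Quotient.mk J) ≠ ⊤ := by
        intro htop
        apply hI.ne_top
        have := congrArg (Ideal.comap (Ideal.Quotient.mk J)) htop
        rw [Ideal.comap_map_of_surjective _ hsurj, Ideal.comap_top] at this
        rw [← this]
        rw [← RingHom.ker_eq_comap_bot, Ideal.mk_ker]
        exact (sup_eq_left.mpr hJI).symm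
      have hmax' : (I.map (Ideal.Quotient.mk J)).IsMaximal :=
        (Ideal.map_eq_top_or_isMaximal_of_surjective _ hsurj hI).resolve_left hmapne
      obtain ⟨s', hs'0, hs'⟩ := ih _ hlt (R ⧸ J) rfl _ hmax'
      obtain ⟨t, rfl⟩ := hsurj s'
      refine ⟨t * (1 - e), ?_, ?_⟩
      · intro h0
        apply hs'0
        rw [Ideal.Quotient.eq_zero_iff_mem, Ideal.mem_span_singleton']
        refine ⟨t, ?_⟩
        have : t * 1 - t * e = 0 := by rw [← mul_sub]; exact h0
        linear_combination -this
      · intro x hx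
        have hmem : t * x ∈ J := by
          rw [← Ideal.Quotient.eq_zero_iff_mem, _root_.map_mul]
          exact hs' _ (Ideal.mem_map_of_mem _ hx)
        obtain ⟨c, hc⟩ := Ideal.mem_span_singleton'.mp hmem
        have : t * (1 - e) * x = (t * x) * (1 - e) := by ring
        rw [this, ← hc]
        linear_combination (-c : R) * hee
    · push_neg at he
      have hnil : ∀ x ∈ I, IsNilpotent x := by
        intro x hx
        obtain ⟨t, ht1, htidem⟩ := exists_idem_pow x
        refine ⟨t, ?_⟩
        by_contra h0
        exact h0 (he (x ^ t) htidem (Ideal.pow_mem_of_mem I hx t ht1) ▸ rfl)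
      have hInil : I ≤ nilradical R := fun x hx => mem_nilradical.mpr (hnil x hx)
      obtain ⟨k, hk⟩ := IsNoetherianRing.isNilpotent_nilradical R
      have hex : ∃ k, I ^ k = ⊥ := by
        refine ⟨k, le_bot_iff.mp ?_⟩
        calc I ^ k ≤ (nilradical R) ^ k := Ideal.pow_right_mono hInil k
        _ = ⊥ := by rw [hk]; rfl
      have hnt : Nontrivial R := by
        by_contra h
        rw [not_nontrivial_iff_subsingleton] at h
        exact hI.ne_top (Subsingleton.elim _ _)
      have hjspec : I ^ (Nat.find hex) = ⊥ := Nat.find_spec hex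
      rcases Nat.eq_zero_or_eq_succ_pred (Nat.find hex) with h0 | hsucc
      · exfalso
        rw [h0, pow_zero, Ideal.one_eq_top] at hjspec
        exact one_ne_zero ((Submodule.eq_bot_iff _).mp hjspec 1 Submodule.mem_top)
      · set j' := Nat.find hex - 1
        have hne : I ^ j' ≠ ⊥ := Nat.find_min hex (by omega)
        obtain ⟨s, hs, hs0⟩ := Submodule.exists_mem_ne_zero_of_ne_bot hne
        refine ⟨s, hs0, fun x hx => ?_⟩
        have hmem : s * x ∈ I ^ (j' + 1) := by
          rw [pow_succ]
          exact Ideal.mul_mem_mul hs hx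
        have hj1 : j' + 1 = Nat.find hex := by
          have : Nat.find hex = Nat.find hex - 1 + 1 := by rw [hsucc]; omega
          omega
        rw [hj1, hjspec] at hmem
        exact hmem



lemma exists_perp {R : Type u} [CommRing R] [Fintype R] {m : ℕ}
    (M : Submodule R (Fin m → R)) (hM : M ≠ ⊤) :
    ∃ b : Fin m → R, b ≠ 0 ∧ ∀ v ∈ M, dotProduct b v = 0 := by
  have hcoatomic : IsCoatomic (Submodule R (Fin m → R)) :=
    CompleteLattice.coatomic_of_top_compact
      ((Submodule.fg_iff_compact _).mp (IsNoetherian.noetherian ⊤))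
  obtain ⟨M', hM'coatom, hMM'⟩ := (eq_top_or_exists_le_coatom M).resolve_left hM
  have hsimple : IsSimpleModule R ((Fin m → R) ⧸ M') := isSimpleModule_iff_isCoatom.mpr hM'coatom
  obtain ⟨𝔪, h𝔪, ⟨ψ⟩⟩ := isSimpleModule_iff_quot_maximal.mp hsimple
  obtain ⟨s, hs0, hs⟩ := exists_ann_aux (Fintype.card R) R rfl 𝔪 h𝔪
  set π : (Fin m → R) →ₗ[R] R ⧸ 𝔪 := (ψ : ((Fin m → R) ⧸ M') →ₗ[R] R ⧸ 𝔪) ∘ₗ M'.mkQ with hπ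
  have hπ0 : ∀ v ∈ M', π v = 0 := by
    intro v hv
    simp [hπ, (Submodule.Quotient.mk_eq_zero M').mpr hv]
  -- lifts
  have hliftex : ∀ i, ∃ t : R, Ideal.Quotient.mk 𝔪 t = π (Pi.single i 1) :=
    fun i => Ideal.Quotient.mk_surjective _
  choose t ht using hliftex
  have hkey : ∀ v : Fin m → R, Ideal.Quotient.mk 𝔪 (∑ i, t i * v i) = π v := by
    intro v
    have hsingle : ∀ i : Fin m, (fun j => if i = j then (1:R) else 0) = Pi.single i 1 := by
      intro i; funext j; simp [Pi.single_apply, eq_comm]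
    conv_rhs => rw [pi_eq_sum_univ v]
    simp only [_root_.map_sum, hsingle, _root_.map_smul, ← ht]
    congr 1
    ext i
    rw [mul_comm, ← smul_eq_mul]
    exact Submodule.Quotient.mk_smul 𝔪 (v i) (t i)
  refine ⟨fun i => s * t i, ?_, ?_⟩
  · -- nonzero
    have hexist : ∃ i, t i ∉ 𝔪 := by
      by_contra hall
      push_neg at hall
      have hπzero : ∀ v, π v = 0 := by
        intro v
        rw [← hkey]
        rw [Ideal.Quotient.eq_zero_iff_mem]
        exact Ideal.sum_mem _ fun i _ => Ideal.mul_mem_right _ _ (hall i)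
      apply hM'coatom.1
      rw [eq_top_iff]
      intro v _
      have : M'.mkQ v = 0 := by
        have := hπzero v
        simp only [hπ, LinearMap.comp_apply] at this
        exact ψ.map_eq_zero_iff.mp this
      rwa [← Submodule.Quotient.mk_eq_zero]
    obtain ⟨i0, hi0⟩ := hexist
    intro hb0
    have hbi : s * t i0 = 0 := congrFun hb0 i0
    obtain ⟨y, x, hx, hyx⟩ := h𝔪.exists_inv hi0
    apply hs0
    calc s = s * (y * t i0 + x) := by rw [hyx, mul_one]
    _ = y * (s * t i0) + s * x := by ring
    _ = 0 := by rw [hbi, hs x hx]; ring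
  · intro v hv
    have hmem : (∑ i, t i * v i) ∈ 𝔪 := by
      rw [← Ideal.Quotient.eq_zero_iff_mem, hkey]
      exact hπ0 v (hMM' hv)
    have : dotProduct (fun i => s * t i) v = s * ∑ i, t i * v i := by
      simp [dotProduct, Finset.mul_sum, mul_assoc]
    rw [this, hs _ hmem]

theorem stmt3 [CommRing R] [Fintype R] {m l : ℕ} (A : Matrix (Fin m) (Fin l) R) :
    FRR A ↔ ∃ B : Matrix (Fin l) (Fin m) R, A * B = 1 := by
  constructor
  · intro hFRR
    have hsurj : LinearMap.range (Matrix.mulVecLin A) = ⊤ := by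
      by_contra hM
      obtain ⟨b, hb0, hb⟩ := exists_perp _ hM
      apply hb0
      apply hFRR
      funext j
      have hcol : (fun i => A i j) ∈ LinearMap.range (Matrix.mulVecLin A) := by
        refine ⟨Pi.single j 1, ?_⟩
        funext i
        simp [Matrix.mulVecLin_apply, Matrix.mulVec_single]
      have := hb _ hcol
      simpa [Matrix.vecMul, dotProduct] using this
    have hsurj' : ∀ y : Fin m → R, ∃ x : Fin l → R, A.mulVec x = y := by
      intro y
      have : y ∈ LinearMap.range (Matrix.mulVecLin A) := hsurj ▸ Submodule.mem_top
      obtain ⟨x, hx⟩ := this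
      exact ⟨x, hx⟩
    choose X hX using hsurj'
    refine ⟨Matrix.of fun j i => X (Pi.single i 1) j, ?_⟩
    ext i i'
    have := congrFun (hX (Pi.single i' 1)) i
    simp only [Matrix.mulVec, dotProduct] at this
    simp only [Matrix.mul_apply, Matrix.of_apply, this, Matrix.one_apply, Pi.single_apply]
  · rintro ⟨B, hB⟩ b hb
    calc b = Matrix.vecMul b 1 := by rw [Matrix.vecMul_one]
    _ = Matrix.vecMul b (A * B) := by rw [hB]
    _ = Matrix.vecMul (Matrix.vecMul b A) B := by rw [Matrix.vecMul_vecMul]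
    _ = 0 := by rw [hb, Matrix.zero_vecMul]
end

section
/- Let R be a finite commutative Frobenius ring and A an m × l full-row-rank matrix over R. Then the set of solutions x ∈ R^l of Ax = 0 is a free R-submodule of R^l of rank l − m; that is, there exists an (l−m) × l full-row-rank matrix G over R whose rows form a basis of {x ∈ R^l : Ax = 0}. -/
open Matrix BigOperators

variable {R : Type*}

lemma exists_pow_idem [CommMonoid R] [Finite R] (a : R) :
    ∃ k : ℕ, 0 < k ∧ a ^ k * a ^ k = a ^ k := by
  obtain ⟨i, j, hne, heq⟩ := Finite.exists_ne_map_eq_of_infinite (fun n : ℕ => a ^ n)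
  wlog hij : i < j generalizing i j
  · exact this j i hne.symm heq.symm (by omega)
  set c := j - i with hc
  have hcpos : 0 < c := by omega
  have claim1 : ∀ t, i ≤ t → a ^ (t + c) = a ^ t := by
    intro t ht
    have h1 : t + c = (t - i) + j := by omega
    have h2 : (t - i) + i = t := by omega
    rw [h1, pow_add, ← heq, ← pow_add, h2]
  have claim2 : ∀ s t, i ≤ t → a ^ (t + s * c) = a ^ t := by
    intro s
    induction s with
    | zero => simp
    | succ s ih =>
      intro t ht
      have : t + (s + 1) * c = (t + c) + s * c := by ring
      rw [this, ih _ (by omega), claim1 t ht]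
  refine ⟨(i + 1) * c, by positivity, ?_⟩
  rw [← pow_add]
  have : (i + 1) * c + (i + 1) * c = (i + 1) * c + (i + 1) * c := rfl
  exact claim2 (i + 1) ((i + 1) * c) (by nlinarith)


lemma lemE [CommRing R] [Fintype R] {n : ℕ} (w : Fin n → R)
    (hw : ∀ r : R, (∀ i, r * w i = 0) → r = 0) :
    ∃ e u : Fin n → R,
      (∀ k, e k * e k = e k) ∧
      (∀ k k', k ≠ k' → e k * e k' = 0) ∧
      (∑ k, e k = 1) ∧
      (∀ k, u k * w k = e k) ∧ (∀ k, e k * u k = u k) := by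
  classical
  choose kk hkpos hkidem using fun i : Fin n => exists_pow_idem (w i)
  set f' : ℕ → R := fun t => if h : t < n then w ⟨t, h⟩ ^ kk ⟨t, h⟩ else 0 with hf'
  have hf'idem : ∀ t, f' t * f' t = f' t := by
    intro t
    by_cases h : t < n
    · simp only [hf', dif_pos h]; exact hkidem _
    · simp [hf', dif_neg h]
  set P : ℕ → R := fun t => ∏ j ∈ Finset.range t, (1 - f' j) with hP
  have hPidem : ∀ t, P t * P t = P t := by
    intro t
    show (∏ j ∈ Finset.range t, (1 - f' j)) * (∏ j ∈ Finset.range t, (1 - f' j))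
        = ∏ j ∈ Finset.range t, (1 - f' j)
    rw [← Finset.prod_mul_distrib]
    refine Finset.prod_congr rfl fun j _ => ?_
    have := hf'idem j; ring_nf; ring_nf at this; linear_combination this
  have htel : ∀ t, ∑ s ∈ Finset.range t, P s * f' s = 1 - P t := by
    intro t
    induction t with
    | zero => simp [hP]
    | succ t ih =>
      rw [Finset.sum_range_succ, ih]
      have hps : P (t + 1) = P t * (1 - f' t) := Finset.prod_range_succ _ t
      rw [hps]; ring
  have hfP : ∀ j < n, f' j * P n = 0 := by
    intro j hj
    have hmem : j ∈ Finset.range n := Finset.mem_range.mpr hj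
    have hPn : P n = (1 - f' j) * ∏ x ∈ (Finset.range n).erase j, (1 - f' x) :=
      (Finset.mul_prod_erase _ _ hmem).symm
    rw [hPn, ← mul_assoc]
    have : f' j * (1 - f' j) = 0 := by
      have := hf'idem j; ring_nf; linear_combination -this
    rw [this, zero_mul]
  have hzero : P n = 0 := by
    by_contra hz0
    have claim : ∀ i, i ≤ n → ∃ x : R, x ≠ 0 ∧ x * P n = x ∧
        ∀ j : Fin n, (j : ℕ) < i → x * w j = 0 := by
      intro i
      induction i with
      | zero => exact fun _ => ⟨P n, hz0, hPidem n, fun j hj => absurd hj (by omega)⟩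
      | succ i ih =>
        intro hin
        obtain ⟨x, hx0, hxP, hxw⟩ := ih (by omega)
        set j : Fin n := ⟨i, by omega⟩ with hj
        have hxk : x * w j ^ kk j = 0 := by
          have h1 : f' (j : ℕ) = w j ^ kk j := by
            simp only [hf', dif_pos j.isLt]
          calc x * w j ^ kk j = x * P n * w j ^ kk j := by rw [hxP]
            _ = x * (f' (j : ℕ) * P n) := by rw [h1]; ring
            _ = 0 := by rw [hfP _ j.isLt, mul_zero]
        have hex : ∃ p, x * w j ^ p = 0 := ⟨kk j, hxk⟩
        set p := Nat.find hex with hp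
        have hpspec : x * w j ^ p = 0 := Nat.find_spec hex
        have hppos : 0 < p := by
          rcases Nat.eq_zero_or_pos p with h | h
          · exfalso; apply hx0
            have := hpspec; rw [h, pow_zero, mul_one] at this; exact this
          · exact h
        refine ⟨x * w j ^ (p - 1), ?_, ?_, ?_⟩
        · exact Nat.find_min hex (by omega)
        · rw [mul_comm (x * w j ^ (p-1)) (P n), ← mul_assoc, mul_comm (P n) x, hxP]
        · intro j' hj'
          rcases Nat.lt_succ_iff_lt_or_eq.mp hj' with h | h
          · rw [mul_assoc, mul_comm (w j ^ (p-1)) (w j'), ← mul_assoc, hxw j' h, zero_mul]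
          · have : j' = j := Fin.ext h
            rw [this, mul_assoc, ← pow_succ, Nat.sub_add_cancel hppos, hpspec]
    obtain ⟨x, hx0, _, hxw⟩ := claim n le_rfl
    exact hx0 (hw x fun i => hxw i i.isLt)
  refine ⟨fun k => P k * f' k, fun k => P k * f' k * w k ^ (kk k - 1), ?_, ?_, ?_, ?_, ?_⟩
  · intro k
    have h1 := hPidem (k : ℕ); have h2 := hf'idem (k : ℕ)
    calc P k * f' k * (P k * f' k) = (P k * P k) * (f' k * f' k) := by ring
      _ = P k * f' k := by rw [h1, h2]
  · intro k k' hne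
    have key : ∀ a b : Fin n, (a : ℕ) < (b : ℕ) → (P a * f' a) * (P b * f' b) = 0 := by
      intro a b hab
      have hmem : (a : ℕ) ∈ Finset.range (b : ℕ) := Finset.mem_range.mpr hab
      have hPb : P (b : ℕ) = (1 - f' a) * ∏ j ∈ (Finset.range (b:ℕ)).erase a, (1 - f' j) :=
        (Finset.mul_prod_erase _ _ hmem).symm
      have h0 : f' (a : ℕ) * (1 - f' a) = 0 := by
        have := hf'idem (a : ℕ); ring_nf; linear_combination -this
      calc (P a * f' a) * (P b * f' b)
          = P a * (f' a * (1 - f' a)) * (∏ j ∈ (Finset.range (b:ℕ)).erase a, (1 - f' j)) * f' b := by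
            rw [hPb]; ring
        _ = 0 := by rw [h0]; ring
    rcases lt_or_gt_of_ne (fun h : (k : ℕ) = (k' : ℕ) => hne (Fin.ext h)) with h | h
    · exact key k k' h
    · rw [mul_comm]; exact key k' k h
  · have : ∑ k : Fin n, P k * f' k = ∑ s ∈ Finset.range n, P s * f' s :=
      Fin.sum_univ_eq_sum_range (fun s => P s * f' s) n
    rw [this, htel, hzero, sub_zero]
  · intro k
    have h1 : f' (k : ℕ) = w k ^ kk k := by
      simp only [hf', dif_pos k.isLt, Fin.eta]
    have h2 : w k ^ (kk k - 1) * w k = w k ^ kk k := by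
      rw [← pow_succ, Nat.sub_add_cancel (hkpos k)]
    calc P k * f' k * w k ^ (kk k - 1) * w k = P k * (f' k * (w k ^ (kk k - 1) * w k)) := by ring
      _ = P k * (f' k * f' k) := by rw [h2, h1]
      _ = P k * f' k := by rw [hf'idem]
  · intro k
    have h1 := hPidem (k : ℕ); have h2 := hf'idem (k : ℕ)
    calc P k * f' k * (P k * f' k * w k ^ (kk k - 1))
        = ((P k * P k) * (f' k * f' k)) * w k ^ (kk k - 1) := by ring
      _ = P k * f' k * w k ^ (kk k - 1) := by rw [h1, h2]


lemma lem1succ [CommRing R] [Fintype R] {n' : ℕ} (w : Fin (n' + 1) → R)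
  (hw : ∀ r : R, (∀ i, r * w i = 0) → r = 0) :
  ∃ H : Matrix (Fin n') (Fin (n' + 1)) R, FRR H ∧
    ((Submodule.span R (Set.range fun j => H j) : Submodule R (Fin (n' + 1) → R)) :
      Set (Fin (n' + 1) → R)) = {x | w ⬝ᵥ x = 0} := by
  classical
  obtain ⟨e, u, hidem, horth, hsum, huw, heu⟩ := lemE w hw
  set H : Matrix (Fin n') (Fin (n' + 1)) R := fun j i =>
    ∑ k, e k * (w k * (if i = k.succAbove j then 1 else 0)
      - w (k.succAbove j) * (if i = k then 1 else 0)) with hH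
  have hK1 : ∀ (k : Fin (n' + 1)) (j : Fin n') (i : Fin (n' + 1)),
      e k * H j i = e k * (w k * (if i = k.succAbove j then 1 else 0)
        - w (k.succAbove j) * (if i = k then 1 else 0)) := by
    intro k j i
    have hHji : H j i = ∑ k', e k' * (w k' * (if i = k'.succAbove j then 1 else 0)
        - w (k'.succAbove j) * (if i = k' then 1 else 0)) := rfl
    rw [hHji, Finset.mul_sum]
    rw [Finset.sum_eq_single k]
    · rw [← mul_assoc, hidem k]
    · intro b _ hbk
      rw [← mul_assoc, horth k b (Ne.symm hbk), zero_mul]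
    · intro h; exact absurd (Finset.mem_univ k) h
  have hK2 : ∀ j, w ⬝ᵥ H j = 0 := by
    intro j
    show ∑ i, w i * H j i = 0
    have hexp : ∀ i, w i * H j i = ∑ k, w i * (e k * (w k * (if i = k.succAbove j then 1 else 0)
        - w (k.succAbove j) * (if i = k then 1 else 0))) := by
      intro i; rw [hH]; exact Finset.mul_sum _ _ _
    simp only [hexp]
    rw [Finset.sum_comm]
    refine Finset.sum_eq_zero fun k _ => ?_
    have h2 : ∀ i : Fin (n' + 1), w i * (e k * (w k * (if i = k.succAbove j then 1 else 0)
          - w (k.succAbove j) * (if i = k then 1 else 0)))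
        = (if i = k.succAbove j then e k * (w k * w i) else 0)
          - (if i = k then e k * (w (k.succAbove j) * w i) else 0) := by
      intro i
      split_ifs <;> ring
    simp only [h2]
    rw [Finset.sum_sub_distrib, Finset.sum_ite_eq' Finset.univ, Finset.sum_ite_eq' Finset.univ]
    simp only [Finset.mem_univ, if_true]
    ring
  refine ⟨H, ?_, ?_⟩
  · -- FRR
    intro c hc
    have hc' : ∀ i, ∑ j, c j * H j i = 0 := by
      intro i
      have := congrFun hc i
      simpa [Matrix.vecMul, dotProduct] using this
    have step1 : ∀ (k : Fin (n' + 1)) (j₀ : Fin n'), c j₀ * (e k * w k) = 0 := by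
      intro k j₀
      have h := hc' (k.succAbove j₀)
      have h2 : e k * ∑ j, c j * H j (k.succAbove j₀) = 0 := by rw [h, mul_zero]
      rw [Finset.mul_sum] at h2
      have h3 : ∀ j : Fin n', e k * (c j * H j (k.succAbove j₀))
          = if j = j₀ then c j₀ * (e k * w k) else 0 := by
        intro j
        have hr : e k * (c j * H j (k.succAbove j₀)) = c j * (e k * H j (k.succAbove j₀)) := by
          ring
        rw [hr, hK1]
        rw [if_neg (Fin.succAbove_ne k j₀)]
        by_cases hj : j = j₀
        · subst hj
          rw [if_pos rfl, if_pos rfl]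
          ring
        · have hne2 : k.succAbove j₀ ≠ k.succAbove j := by
            intro hcontra
            exact hj (Fin.succAbove_right_injective hcontra).symm
          rw [if_neg hne2, if_neg hj]
          ring
      rw [Finset.sum_congr rfl (fun j _ => h3 j), Finset.sum_ite_eq' Finset.univ] at h2
      simpa using h2
    funext j₀
    have hfin : c j₀ = c j₀ * ∑ k, e k := by rw [hsum, mul_one]
    rw [Finset.mul_sum] at hfin
    have hz : ∀ k : Fin (n' + 1), c j₀ * e k = 0 := by
      intro k
      have h4 := step1 k j₀
      calc c j₀ * e k = c j₀ * (e k * e k) := by rw [hidem]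
        _ = c j₀ * (e k * (u k * w k)) := by rw [huw]
        _ = (c j₀ * (e k * w k)) * u k := by ring
        _ = 0 := by rw [h4, zero_mul]
    rw [Finset.sum_congr rfl (fun k _ => hz k), Finset.sum_const_zero] at hfin
    exact hfin
  · -- span = kernel
    set Kmod : Submodule R (Fin (n' + 1) → R) :=
      { carrier := {x | w ⬝ᵥ x = 0}
        add_mem' := by
          intro a b ha hb
          simp only [Set.mem_setOf_eq] at *
          rw [dotProduct_add, ha, hb, add_zero]
        zero_mem' := by simp
        smul_mem' := by
          intro r x hx
          simp only [Set.mem_setOf_eq] at *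
          rw [dotProduct_smul, hx, smul_zero] } with hKmod
    ext x
    simp only [SetLike.mem_coe, Set.mem_setOf_eq]
    constructor
    · intro hx
      have hrange : (Set.range fun j => H j) ⊆ (Kmod : Set (Fin (n' + 1) → R)) := by
        rintro _ ⟨j, rfl⟩
        exact hK2 j
      exact Submodule.span_le.mpr hrange hx
    · intro hx
      have hxdecomp : x = ∑ k, e k • x := by
        funext i
        rw [Finset.sum_apply]
        simp only [Pi.smul_apply, smul_eq_mul]
        rw [← Finset.sum_mul, hsum, one_mul]
      rw [hxdecomp]
      refine Submodule.sum_mem _ fun k _ => ?_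
      have hkey : e k • x = ∑ j, (x (k.succAbove j) * u k) • H j := by
        funext i
        rw [Finset.sum_apply]
        simp only [Pi.smul_apply, smul_eq_mul]
        have hterm : ∀ j : Fin n', x (k.succAbove j) * u k * H j i
            = x (k.succAbove j) * (u k * (w k * (if i = k.succAbove j then 1 else 0)
              - w (k.succAbove j) * (if i = k then 1 else 0))) := by
          intro j
          calc x (k.succAbove j) * u k * H j i
              = x (k.succAbove j) * ((e k * u k) * H j i) := by rw [heu]; ring
            _ = x (k.succAbove j) * (u k * (e k * H j i)) := by ring
            _ = x (k.succAbove j) * (u k * (e k * (w k * (if i = k.succAbove j then 1 else 0)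
                  - w (k.succAbove j) * (if i = k then 1 else 0)))) := by rw [hK1]
            _ = x (k.succAbove j) * ((e k * u k) * (w k * (if i = k.succAbove j then 1 else 0)
                  - w (k.succAbove j) * (if i = k then 1 else 0))) := by ring
            _ = _ := by rw [heu]
        simp only [hterm]
        by_cases hik : i = k
        · have h9 : ∀ j : Fin n', x (k.succAbove j) * (u k * (w k
                * (if i = k.succAbove j then 1 else 0)
              - w (k.succAbove j) * (if i = k then 1 else 0)))
              = -(u k * (w (k.succAbove j) * x (k.succAbove j))) := by
            intro j
            have hne4 : i ≠ k.succAbove j := by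
              rw [hik]
              exact fun hcontra => (Fin.succAbove_ne k j) hcontra.symm
            rw [if_neg hne4, if_pos hik]
            ring
          simp only [h9]
          have h10 : ∑ j : Fin n', -(u k * (w (k.succAbove j) * x (k.succAbove j)))
              = -(u k * ∑ j : Fin n', w (k.succAbove j) * x (k.succAbove j)) := by
            rw [Finset.mul_sum, Finset.sum_neg_distrib]
          have h5 : ∑ j : Fin n', w (k.succAbove j) * x (k.succAbove j) = -(w k * x k) := by
            have h6 := Fin.sum_univ_succAbove (fun i' => w i' * x i') k
            have h7 : ∑ i', w i' * x i' = 0 := hx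
            rw [h7] at h6
            linear_combination -h6
          rw [h10, h5, hik]
          linear_combination (-(x k)) * huw k
        · obtain ⟨j₁, hj₁⟩ := Fin.exists_succAbove_eq hik
          have h8 : ∀ j : Fin n', x (k.succAbove j) * (u k * (w k
                * (if i = k.succAbove j then 1 else 0)
              - w (k.succAbove j) * (if i = k then 1 else 0)))
              = if j = j₁ then x i * (u k * w k) else 0 := by
            intro j
            rw [if_neg hik]
            by_cases hj : j = j₁
            · subst hj
              rw [if_pos hj₁.symm, hj₁, if_pos rfl]
              ring
            · have hne3 : i ≠ k.succAbove j := by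
                rw [← hj₁]
                intro hcontra
                exact hj (Fin.succAbove_right_injective hcontra).symm
              rw [if_neg hne3, if_neg hj]
              ring
          simp only [h8]
          rw [Finset.sum_ite_eq' Finset.univ]
          simp only [Finset.mem_univ, if_true]
          rw [huw]
          ring
      rw [hkey]
      exact Submodule.sum_mem _ fun j _ =>
        Submodule.smul_mem _ _ (Submodule.subset_span ⟨j, rfl⟩)


lemma lem1 [CommRing R] [Fintype R] {n : ℕ} (w : Fin n → R)
    (hw : ∀ r : R, (∀ i, r * w i = 0) → r = 0) :
    ∃ H : Matrix (Fin (n - 1)) (Fin n) R, FRR H ∧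
      ((Submodule.span R (Set.range fun j => H j) : Submodule R (Fin n → R)) :
        Set (Fin n → R)) = {x | w ⬝ᵥ x = 0} := by
  classical
  cases n with
  | zero =>
    haveI : IsEmpty (Fin (0 - 1)) := ⟨fun j => Fin.elim0 j⟩
    refine ⟨0, ?_, ?_⟩
    · intro b _; funext j; exact Fin.elim0 j
    · have h1 : (Set.range fun j : Fin (0 - 1) => (0 : Matrix (Fin (0-1)) (Fin 0) R) j) = ∅ :=
        Set.range_eq_empty _
      rw [h1, Submodule.span_empty]
      ext x
      simp only [Submodule.bot_coe, Set.mem_singleton_iff, Set.mem_setOf_eq]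
      constructor
      · intro h; simp [dotProduct]
      · intro _; funext i; exact Fin.elim0 i
  | succ n' => exact lem1succ w hw
lemma mem_perpCode [CommRing R] {N : ℕ} {C : Submodule R (Fin N → R)} {x : Fin N → R} :
    x ∈ perpCode C ↔ ∀ c ∈ C, x ⬝ᵥ c = 0 := Iff.rfl


lemma vecMul_eq_sum_rows [CommRing R] {p l : ℕ} (y : Fin p → R) (M : Matrix (Fin p) (Fin l) R) :
    Matrix.vecMul y M = ∑ j, y j • M j := by
  funext k
  rw [Finset.sum_apply]
  simp only [Pi.smul_apply, smul_eq_mul]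
  rfl


lemma mainlem [CommRing R] [Fintype R] (hFrob : IsFrobenius R) {l : ℕ} :
    ∀ (m : ℕ) (A : Matrix (Fin m) (Fin l) R), FRR A →
    ∃ G : Matrix (Fin (l - m)) (Fin l) R, FRR G ∧
      ((Submodule.span R (Set.range fun i => G i) : Submodule R (Fin l → R)) :
        Set (Fin l → R)) = {x | A.mulVec x = 0} := by
  intro m
  induction m with
  | zero =>
    intro A _
    refine ⟨(1 : Matrix (Fin l) (Fin l) R), ?_, ?_⟩
    · intro b hb
      rwa [Matrix.vecMul_one] at hb
    · ext x
      simp only [SetLike.mem_coe, Set.mem_setOf_eq]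
      constructor
      · intro _
        funext i
        exact Fin.elim0 i
      · intro _
        refine Submodule.mem_span_range_iff_exists_fun R |>.mpr ⟨x, ?_⟩
        funext k
        rw [Finset.sum_apply]
        simp only [Pi.smul_apply, smul_eq_mul, Matrix.one_apply]
        rw [Finset.sum_congr rfl (fun i _ => by rw [mul_ite, mul_one, mul_zero]),
          Finset.sum_ite_eq' Finset.univ]
        simp
  | succ m ih =>
    intro A hA
    set A' : Matrix (Fin m) (Fin l) R := fun i => A i.castSucc with hA'def
    set a : Fin l → R := A (Fin.last m) with hadef
    have hA' : FRR A' := by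
      intro b hb
      have h1 : Matrix.vecMul (Fin.snoc b 0 : Fin (m + 1) → R) A = 0 := by
        rw [vecMul_eq_sum_rows, Fin.sum_univ_castSucc]
        simp only [Fin.snoc_castSucc, Fin.snoc_last, zero_smul, add_zero]
        have e1 : ∑ i : Fin m, b i • A i.castSucc = Matrix.vecMul b A' :=
          (vecMul_eq_sum_rows b A').symm
        rw [e1, hb]
      have h2 := hA _ h1
      funext i
      have h3 := congrFun h2 i.castSucc
      rwa [Fin.snoc_castSucc] at h3
    obtain ⟨G', hG'frr, hG'span⟩ := ih A' hA'
    set w : Fin (l - m) → R := fun j => G' j ⬝ᵥ a with hwdef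
    have hker' : ∀ x : Fin l → R,
        A'.mulVec x = 0 ↔ x ∈ Submodule.span R (Set.range fun i => G' i) := by
      intro x
      constructor
      · intro hx
        have h : x ∈ ({x | A'.mulVec x = 0} : Set (Fin l → R)) := hx
        rw [← hG'span] at h
        exact h
      · intro hx
        have h : x ∈ ((Submodule.span R (Set.range fun i => G' i) : Submodule R (Fin l → R)) :
            Set (Fin l → R)) := hx
        rw [hG'span] at h
        exact h
    have hF2 : ∀ y : Fin (l - m) → R, a ⬝ᵥ Matrix.vecMul y G' = y ⬝ᵥ w := by
      intro y
      show ∑ k, a k * (∑ j, y j * G' j k) = ∑ j, y j * w j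
      simp only [Finset.mul_sum]
      rw [Finset.sum_comm]
      refine Finset.sum_congr rfl fun j _ => ?_
      show ∑ k, a k * (y j * G' j k) = y j * (G' j ⬝ᵥ a)
      show ∑ k, a k * (y j * G' j k) = y j * ∑ k, G' j k * a k
      rw [Finset.mul_sum]
      exact Finset.sum_congr rfl fun k _ => by ring
    have hwann : ∀ r : R, (∀ j, r * w j = 0) → r = 0 := by
      intro r hr
      have hmem : (r • a) ∈ perpCode (perpCode
          (Submodule.span R (Set.range fun i => A' i))) := by
        rw [mem_perpCode]
        intro c hc
        rw [mem_perpCode] at hc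
        have hcker : A'.mulVec c = 0 := by
          funext i
          have h4 : c ⬝ᵥ A' i = 0 := hc (A' i) (Submodule.subset_span ⟨i, rfl⟩)
          show A' i ⬝ᵥ c = 0
          rwa [dotProduct_comm]
        obtain ⟨y, hy⟩ := Submodule.mem_span_range_iff_exists_fun R |>.mp ((hker' c).mp hcker)
        have hcy : c = Matrix.vecMul y G' := by rw [vecMul_eq_sum_rows, hy]
        rw [smul_dotProduct, hcy, hF2]
        show r • ∑ j, y j * w j = 0
        rw [smul_eq_mul, Finset.mul_sum]
        refine Finset.sum_eq_zero fun j _ => ?_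
        calc r * (y j * w j) = y j * (r * w j) := by ring
          _ = 0 := by rw [hr j, mul_zero]
      rw [hFrob l _] at hmem
      obtain ⟨cc, hcc⟩ := Submodule.mem_span_range_iff_exists_fun R |>.mp hmem
      have h5 : Matrix.vecMul (Fin.snoc (fun i => -(cc i)) r : Fin (m + 1) → R) A = 0 := by
        rw [vecMul_eq_sum_rows, Fin.sum_univ_castSucc]
        simp only [Fin.snoc_castSucc, Fin.snoc_last]
        have e1 : ∑ i : Fin m, (-(cc i)) • A i.castSucc = -(∑ i : Fin m, cc i • A' i) := by
          rw [← Finset.sum_neg_distrib]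
          refine Finset.sum_congr rfl fun i _ => ?_
          have e2 : cc i • A' i = cc i • A i.castSucc := rfl
          rw [e2, neg_smul]
        rw [e1, hcc]
        show -(r • a) + r • A (Fin.last m) = 0
        have e3 : r • A (Fin.last m) = r • a := rfl
        rw [e3, neg_add_cancel]
      have h8 := congrFun (hA _ h5) (Fin.last m)
      rwa [Fin.snoc_last] at h8
    obtain ⟨H, hHfrr, hHspan⟩ := lem1 w hwann
    have hcdim : l - (m + 1) = l - m - 1 := by omega
    have hcast2 : ∀ j : Fin (l - (m + 1)), Fin.cast hcdim.symm (Fin.cast hcdim j) = j :=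
      fun j => Fin.ext (by simp)
    set G : Matrix (Fin (l - (m + 1))) (Fin l) R :=
      fun j => Matrix.vecMul (H (Fin.cast hcdim j)) G' with hGdef
    have hHrow : ∀ jh, w ⬝ᵥ H jh = 0 := by
      intro jh
      have h : H jh ∈ ((Submodule.span R (Set.range fun j => H j) :
          Submodule R (Fin (l - m) → R)) : Set _) := Submodule.subset_span ⟨jh, rfl⟩
      rw [hHspan] at h
      exact h
    have hF3 : ∀ x : Fin l → R, A.mulVec x = 0 ↔ (A'.mulVec x = 0 ∧ a ⬝ᵥ x = 0) := by
      intro x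
      constructor
      · intro h
        exact ⟨funext fun i => congrFun h i.castSucc, congrFun h (Fin.last m)⟩
      · rintro ⟨h1, h2⟩
        funext i
        induction i using Fin.lastCases with
        | last => exact h2
        | cast i => exact congrFun h1 i
    have hkey : ∀ c : Fin (l - (m + 1)) → R,
        Matrix.vecMul c G
          = Matrix.vecMul (Matrix.vecMul (fun jh => c (Fin.cast hcdim.symm jh)) H) G' := by
      intro c
      funext k
      show ∑ j, c j * G j k = ∑ j', (∑ jh, c (Fin.cast hcdim.symm jh) * H jh j') * G' j' k
      have hG : ∀ j, c j * G j k = ∑ j', c j * (H (Fin.cast hcdim j) j' * G' j' k) := by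
        intro j
        show c j * ∑ j', H (Fin.cast hcdim j) j' * G' j' k = _
        rw [Finset.mul_sum]
      rw [Finset.sum_congr rfl fun j _ => hG j, Finset.sum_comm]
      refine Finset.sum_congr rfl fun j' _ => ?_
      rw [Finset.sum_mul]
      have := Equiv.sum_comp (finCongr hcdim)
        (fun jh => c (Fin.cast hcdim.symm jh) * H jh j' * G' j' k)
      rw [← this]
      refine Finset.sum_congr rfl fun j _ => ?_
      simp only [finCongr_apply, hcast2]
      ring
    refine ⟨G, ?_, ?_⟩
    · intro c hcg
      have h1 : Matrix.vecMul (Matrix.vecMul (fun jh => c (Fin.cast hcdim.symm jh)) H) G' = 0 := by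
        rw [← hkey c, hcg]
      have h2 := hHfrr _ (hG'frr _ h1)
      funext j
      have h3 := congrFun h2 (Fin.cast hcdim j)
      simp only [hcast2] at h3
      exact h3
    · ext x
      simp only [SetLike.mem_coe, Set.mem_setOf_eq]
      constructor
      · intro hx
        have hrow : ∀ j, A'.mulVec (G j) = 0 ∧ a ⬝ᵥ (G j) = 0 := by
          intro j
          constructor
          · rw [hker']
            refine Submodule.mem_span_range_iff_exists_fun R |>.mpr ⟨H (Fin.cast hcdim j), ?_⟩
            rw [← vecMul_eq_sum_rows]
          · rw [hGdef]
            show a ⬝ᵥ Matrix.vecMul (H (Fin.cast hcdim j)) G' = 0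
            rw [hF2]
            rw [dotProduct_comm]
            exact hHrow _
        -- x is in the span of rows of G, each of which is in ker A
        have hsub : Submodule.span R (Set.range fun i => G i) ≤
            LinearMap.ker (Matrix.mulVecLin A) := by
          rw [Submodule.span_le]
          rintro _ ⟨j, rfl⟩
          rw [SetLike.mem_coe, LinearMap.mem_ker, Matrix.mulVecLin_apply]
          rw [hF3]
          exact hrow j
        have := hsub hx
        rwa [LinearMap.mem_ker, Matrix.mulVecLin_apply] at this
      · intro hx
        rw [hF3 x] at hx
        obtain ⟨h1, h2⟩ := hx
        obtain ⟨y, hy⟩ := Submodule.mem_span_range_iff_exists_fun R |>.mp ((hker' x).mp h1)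
        have hxy : x = Matrix.vecMul y G' := by rw [vecMul_eq_sum_rows, hy]
        have hyw : w ⬝ᵥ y = 0 := by
          rw [dotProduct_comm, ← hF2, ← hxy]
          exact h2
        have hymem : y ∈ ((Submodule.span R (Set.range fun j => H j) :
            Submodule R (Fin (l - m) → R)) : Set _) := by
          rw [hHspan]
          exact hyw
        obtain ⟨d, hd⟩ := Submodule.mem_span_range_iff_exists_fun R |>.mp hymem
        refine Submodule.mem_span_range_iff_exists_fun R |>.mpr
          ⟨fun j => d (Fin.cast hcdim j), ?_⟩
        have hlin : Matrix.vecMul (∑ jh, d jh • H jh) G'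
            = ∑ jh, d jh • Matrix.vecMul (H jh) G' := by
          funext k
          rw [Finset.sum_apply]
          show ∑ j', (∑ jh, d jh • H jh) j' * G' j' k
              = ∑ jh, (d jh • Matrix.vecMul (H jh) G') k
          simp only [Finset.sum_apply, Pi.smul_apply, smul_eq_mul, Finset.sum_mul]
          rw [Finset.sum_comm]
          refine Finset.sum_congr rfl fun jh _ => ?_
          show ∑ j', d jh * H jh j' * G' j' k = d jh * ∑ j', H jh j' * G' j' k
          rw [Finset.mul_sum]
          exact Finset.sum_congr rfl fun j' _ => by ring
        rw [hxy, ← hd, hlin,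
          ← Equiv.sum_comp (finCongr hcdim) (fun jh => d jh • Matrix.vecMul (H jh) G')]
        refine Finset.sum_congr rfl fun j _ => ?_
        simp only [finCongr_apply]
        rfl


theorem stmt5 [CommRing R] [Fintype R] (hFrob : IsFrobenius R) {m l : ℕ}
    (A : Matrix (Fin m) (Fin l) R) (hA : FRR A) :
    ∃ G : Matrix (Fin (l - m)) (Fin l) R, FRR G ∧
      ((Submodule.span R (Set.range fun i => G i) : Submodule R (Fin l → R)) :
        Set (Fin l → R)) = {x | A.mulVec x = 0} := by
  exact mainlem hFrob m A hA
end

section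
/- Let R be a finite commutative Frobenius ring and V a submodule of R^l. Then V is a free R-module if and only if its orthogonal complement V^⊥ = {x ∈ R^l : ⟨x,v⟩ = 0 for all v ∈ V} (with respect to the standard Euclidean bilinear form) is a free R-module. -/
open Matrix BigOperators

variable {R : Type*}

section Aux

open Function LinearMap

universe u

variable {R : Type u} [CommRing R]

private noncomputable def surjCount (R : Type u) [CommRing R] (M X : Type u)
    [AddCommGroup M] [Module R M] [AddCommGroup X] [Module R X] : ℕ :=
  Nat.card {f : M →ₗ[R] X // Function.Surjective f}

private lemma finite_hom {M X : Type u} [AddCommGroup M] [Module R M] [AddCommGroup X]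
    [Module R X] [Finite M] [Finite X] : Finite (M →ₗ[R] X) :=
  Finite.of_injective (fun f => (f : M → X)) DFunLike.coe_injective

/-- maps with range `W` correspond to surjections onto `W`. -/
private def rangeEquivSurj (M : Type u) [AddCommGroup M] [Module R M] {X : Type u}
    [AddCommGroup X] [Module R X] (W : Submodule R X) :
    {f : M →ₗ[R] X // LinearMap.range f = W} ≃ {g : M →ₗ[R] W // Function.Surjective g} where
  toFun f := ⟨LinearMap.codRestrict W f.1 (fun x => by
      have h := LinearMap.mem_range_self f.1 x
      rwa [f.2] at h), by
    rintro ⟨y, hy⟩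
    rw [← f.2] at hy
    obtain ⟨x, hx⟩ := hy
    exact ⟨x, Subtype.ext hx⟩⟩
  invFun g := ⟨W.subtype ∘ₗ g.1, by
    rw [LinearMap.range_comp, LinearMap.range_eq_top.mpr g.2, Submodule.map_subtype_top]⟩
  left_inv f := by ext x; rfl
  right_inv g := by ext x; rfl

private lemma nat_card_sigma {ι : Type*} [Fintype ι] {f : ι → Type u} [∀ i, Finite (f i)] :
    Nat.card (Σ i, f i) = ∑ i, Nat.card (f i) := by
  classical
  letI := fun i => Fintype.ofFinite (f i)
  simp [Nat.card_eq_fintype_card]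

private lemma homCard_eq_sum (M X : Type u) [AddCommGroup M] [Module R M] [AddCommGroup X]
    [Module R X] [Finite M] [Finite X] [Fintype (Submodule R X)] :
    Nat.card (M →ₗ[R] X) = ∑ W : Submodule R X, surjCount R M W := by
  haveI : Finite (M →ₗ[R] X) := finite_hom
  haveI : ∀ W : Submodule R X, Finite {f : M →ₗ[R] X // LinearMap.range f = W} :=
    fun W => Subtype.finite
  rw [Nat.card_congr (Equiv.sigmaFiberEquiv (fun f : M →ₗ[R] X => LinearMap.range f)).symm,
    nat_card_sigma]
  refine Finset.sum_congr rfl fun W _ => ?_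
  exact Nat.card_congr (rangeEquivSurj M W)

private lemma surjCount_top (M X : Type u) [AddCommGroup M] [Module R M] [AddCommGroup X]
    [Module R X] : surjCount R M ((⊤ : Submodule R X) : Type u) = surjCount R M X := by
  refine Nat.card_congr
    ⟨fun g => ⟨(Submodule.topEquiv : (⊤ : Submodule R X) ≃ₗ[R] X).toLinearMap ∘ₗ g.1,
        Submodule.topEquiv.surjective.comp g.2⟩,
     fun f => ⟨(Submodule.topEquiv : (⊤ : Submodule R X) ≃ₗ[R] X).symm.toLinearMap ∘ₗ f.1,
        Submodule.topEquiv.symm.surjective.comp f.2⟩, ?_, ?_⟩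
  · intro g; ext x; rfl
  · intro f; ext x; rfl

private lemma card_lt_of_ne_top {X : Type u} [AddCommGroup X] [Module R X] [Finite X]
    {W : Submodule R X} (hW : W ≠ ⊤) : Nat.card W < Nat.card X := by
  have h1 : (W : Set X) ⊂ Set.univ := by
    refine Set.ssubset_univ_iff.mpr fun h => hW ?_
    exact SetLike.coe_injective (by simpa using h)
  calc Nat.card W = (W : Set X).ncard := (Nat.card_coe_set_eq _)
    _ < (Set.univ : Set X).ncard := Set.ncard_lt_ncard h1 (Set.finite_univ)
    _ = Nat.card X := Set.ncard_univ X

private lemma surjCount_eq_of_homCard_eq (M N : Type u) [AddCommGroup M] [Module R M]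
    [AddCommGroup N] [Module R N] [Finite M] [Finite N]
    (h : ∀ (X : Type u) [AddCommGroup X] [Module R X] [Finite X],
      Nat.card (M →ₗ[R] X) = Nat.card (N →ₗ[R] X)) :
    ∀ (X : Type u) [AddCommGroup X] [Module R X] [Finite X],
      surjCount R M X = surjCount R N X := by
  suffices H : ∀ (n : ℕ) (X : Type u) [AddCommGroup X] [Module R X] [Finite X],
      Nat.card X ≤ n → surjCount R M X = surjCount R N X by
    intro X _ _ _
    exact H (Nat.card X) X le_rfl
  intro n
  induction n with
  | zero =>
    intro X _ _ _ hX
    exact absurd (Nat.card_pos.trans_le hX) (lt_irrefl 0)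
  | succ n ih =>
    intro X _ _ _ hX
    classical
    haveI : Finite (Submodule R X) :=
      Finite.of_injective (fun W : Submodule R X => (W : Set X)) SetLike.coe_injective
    haveI : Fintype (Submodule R X) := Fintype.ofFinite _
    have hhom := h X
    rw [homCard_eq_sum M X, homCard_eq_sum N X] at hhom
    rw [← Finset.add_sum_erase _ _ (Finset.mem_univ (⊤ : Submodule R X)),
      ← Finset.add_sum_erase _ _ (Finset.mem_univ (⊤ : Submodule R X))] at hhom
    have htail : ∀ W ∈ Finset.univ.erase (⊤ : Submodule R X),
        surjCount R M W = surjCount R N W := by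
      intro W hWmem
      have hW : W ≠ ⊤ := (Finset.mem_erase.mp hWmem).1
      exact ih W (Nat.lt_succ_iff.mp ((card_lt_of_ne_top hW).trans_le hX))
    rw [Finset.sum_congr rfl htail] at hhom
    have := Nat.add_right_cancel hhom
    rwa [surjCount_top M X, surjCount_top N X] at this

private lemma linearEquiv_of_homCard_eq (M N : Type u) [AddCommGroup M] [Module R M]
    [AddCommGroup N] [Module R N] [Finite M] [Finite N]
    (h : ∀ (X : Type u) [AddCommGroup X] [Module R X] [Finite X],
      Nat.card (M →ₗ[R] X) = Nat.card (N →ₗ[R] X)) :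
    Nonempty (M ≃ₗ[R] N) := by
  have hMN : surjCount R M N = surjCount R N N := surjCount_eq_of_homCard_eq M N h N
  have hNM : surjCount R N M = surjCount R M M :=
    surjCount_eq_of_homCard_eq N M (fun X _ _ _ => (h X).symm) M
  haveI : Finite (N →ₗ[R] N) := finite_hom
  haveI : Finite (M →ₗ[R] M) := finite_hom
  haveI : Finite (M →ₗ[R] N) := finite_hom
  haveI : Finite (N →ₗ[R] M) := finite_hom
  have hpos : 0 < surjCount R N N :=
    Nat.card_pos_iff.mpr ⟨⟨⟨LinearMap.id, Function.surjective_id⟩⟩, Subtype.finite⟩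
  have hpos' : 0 < surjCount R M M :=
    Nat.card_pos_iff.mpr ⟨⟨⟨LinearMap.id, Function.surjective_id⟩⟩, Subtype.finite⟩
  have h1 : 0 < surjCount R M N := hMN ▸ hpos
  have h2 : 0 < surjCount R N M := hNM ▸ hpos'
  obtain ⟨f, hf⟩ := (Nat.card_pos_iff.mp h1).1.some
  obtain ⟨g, hg⟩ := (Nat.card_pos_iff.mp h2).1.some
  have hcard : Nat.card M = Nat.card N :=
    le_antisymm (Nat.card_le_card_of_surjective g hg) (Nat.card_le_card_of_surjective f hf)
  exact ⟨LinearEquiv.ofBijective f ((Nat.bijective_iff_surjective_and_card f).mpr ⟨hf, hcard⟩)⟩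

private lemma homCard_pi (n : ℕ) (X : Type u) [AddCommGroup X] [Module R X] :
    Nat.card ((Fin n → R) →ₗ[R] X) = Nat.card X ^ n := by
  have e : ((Fin n → R) →ₗ[R] X) ≃ (Fin n → X) :=
    ((LinearMap.lsum R (fun _ : Fin n => R) R).symm.toEquiv).trans
      (Equiv.piCongrRight fun _ => (LinearMap.ringLmapEquivSelf R R X).toEquiv)
  rw [Nat.card_congr e, Nat.card_fun]
  simp [Nat.card_eq_fintype_card]

end Aux

section Main

open Function Matrix

private lemma perp_free_aux {R : Type*} [CommRing R] [Fintype R] [Nontrivial R]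
    (hFrob : IsFrobenius R) {l k : ℕ} (V : Submodule R (Fin l → R))
    (bas : Module.Basis (Fin k) R V) : Module.Free R (perpCode V) := by
  classical
  set G : Matrix (Fin k) (Fin l) R := Matrix.of fun i j => (bas i : Fin l → R) j with hG
  set φ : (Fin l → R) →ₗ[R] (Fin k → R) := G.mulVecLin with hφdef
  have hφ : ∀ x i, φ x i = (bas i : Fin l → R) ⬝ᵥ x := fun x i => rfl
  -- kernel of φ is the perp code
  have hker : LinearMap.ker φ = perpCode V := by
    ext x
    constructor
    · intro hx c hc
      have hx' : ∀ i, (bas i : Fin l → R) ⬝ᵥ x = 0 := by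
        intro i
        have := congrFun (LinearMap.mem_ker.mp hx) i
        rwa [hφ] at this
      have hrep := bas.sum_repr ⟨c, hc⟩
      set r : Fin k → R := fun i => (bas.repr ⟨c, hc⟩) i with hr
      have hc' : c = ∑ i, r i • (bas i : Fin l → R) := by
        have h1 := congrArg (Subtype.val) hrep
        simp only [Submodule.coe_sum, Submodule.coe_smul] at h1
        exact h1.symm
      rw [hc']
      have hswap : x ⬝ᵥ (∑ i, r i • (bas i : Fin l → R)) =
          ∑ i, r i * ((bas i : Fin l → R) ⬝ᵥ x) := by
        simp only [dotProduct, Finset.sum_apply, Pi.smul_apply, smul_eq_mul,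
          Finset.mul_sum, Finset.sum_mul]
        rw [Finset.sum_comm]
        refine Finset.sum_congr rfl fun i _ => Finset.sum_congr rfl fun j _ => ?_
        ring
      rw [hswap]
      exact Finset.sum_eq_zero fun i _ => by rw [hx' i, mul_zero]
    · intro hx
      rw [LinearMap.mem_ker]
      funext i
      rw [hφ, dotProduct_comm]
      exact hx _ (bas i).2
  -- φ is surjective, by the Frobenius double-dual property
  have hperp : perpCode (LinearMap.range φ) = ⊥ := by
    ext c
    simp only [Submodule.mem_bot]
    constructor
    · intro hc
      have h1 : ∀ x, c ⬝ᵥ φ x = 0 := fun x => hc (φ x) ⟨x, rfl⟩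
      have hv : Matrix.vecMul c G = 0 := by
        funext j
        have h2 := h1 (Pi.single j 1)
        rw [show φ (Pi.single j 1) = G.mulVec (Pi.single j 1) from rfl,
          Matrix.dotProduct_mulVec, dotProduct_single, mul_one] at h2
        simpa using h2
      have hsum : (∑ i, c i • bas i) = 0 := by
        apply Subtype.ext
        have hcoe : ((∑ i, c i • bas i : V) : Fin l → R) =
            ∑ i, c i • (bas i : Fin l → R) := by
          simp
        rw [hcoe]
        funext j
        have := congrFun hv j
        simpa [Matrix.vecMul, dotProduct, hG] using this
      have hz := Fintype.linearIndependent_iff.mp bas.linearIndependent c hsum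
      funext i; exact hz i
    · rintro rfl
      intro y _
      simp
  have hsurj : LinearMap.range φ = ⊤ := by
    have h1 := hFrob k (LinearMap.range φ)
    rw [hperp] at h1
    rw [← h1]
    ext x
    simp only [Submodule.mem_top, iff_true]
    intro c hc
    rw [Submodule.mem_bot] at hc
    subst hc
    simp
  -- splitting
  obtain ⟨σ, hσ⟩ := LinearMap.exists_rightInverse_of_surjective φ hsurj
  have hσ' : ∀ y, φ (σ y) = y := fun y => congrFun (congrArg DFunLike.coe hσ) y
  have hcompl : IsCompl (LinearMap.ker φ) (LinearMap.range σ) := by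
    constructor
    · rw [disjoint_iff]
      ext x
      simp only [Submodule.mem_inf, Submodule.mem_bot, LinearMap.mem_ker, LinearMap.mem_range]
      constructor
      · rintro ⟨hx0, y, rfl⟩
        rw [hσ' y] at hx0
        rw [hx0]; exact map_zero σ
      · rintro rfl
        exact ⟨map_zero φ, 0, map_zero σ⟩
    · rw [codisjoint_iff]
      ext x
      simp only [Submodule.mem_top, iff_true]
      have hx : x = (x - σ (φ x)) + σ (φ x) := by abel
      rw [hx]
      refine Submodule.add_mem_sup ?_ ⟨φ x, rfl⟩
      rw [LinearMap.mem_ker, map_sub, hσ' (φ x), sub_self]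
  have hσinj : Function.Injective σ := by
    intro a b hab
    have := congrArg φ hab
    rwa [hσ' a, hσ' b] at this
  -- the equivalence R^l ≃ perpCode V × R^k
  let E : (Fin l → R) ≃ₗ[R] (perpCode V × (Fin k → R)) :=
    (Submodule.prodEquivOfIsCompl _ _ hcompl).symm.trans
      (LinearEquiv.prodCongr (LinearEquiv.ofEq _ _ hker)
        (LinearEquiv.ofInjective σ hσinj).symm)
  -- cardinalities force k ≤ l
  have hcard : Nat.card R ^ l = Nat.card (perpCode V) * Nat.card R ^ k := by
    have h1 := Nat.card_congr E.toEquiv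
    simpa [Nat.card_fun, Nat.card_prod, Nat.card_eq_fintype_card] using h1
  have hRlt : 1 < Nat.card R := Finite.one_lt_card
  have hkl : k ≤ l := by
    by_contra hlt
    push_neg at hlt
    have h2 : Nat.card R ^ k ≤ Nat.card R ^ l := by
      calc Nat.card R ^ k ≤ Nat.card (perpCode V) * Nat.card R ^ k :=
            Nat.le_mul_of_pos_left _ Nat.card_pos
        _ = Nat.card R ^ l := hcard.symm
    exact absurd ((Nat.pow_le_pow_iff_right hRlt).mp h2) (by omega)
  -- equal hom-counts with the free module of rank l - k
  have hhom : ∀ (X : Type _) [AddCommGroup X] [Module R X] [Finite X],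
      Nat.card ((perpCode V) →ₗ[R] X) = Nat.card ((Fin (l - k) → R) →ₗ[R] X) := by
    intro X _ _ _
    have e1 : ((Fin l → R) →ₗ[R] X) ≃ (((perpCode V) →ₗ[R] X) × ((Fin k → R) →ₗ[R] X)) :=
      (LinearEquiv.arrowCongr E (LinearEquiv.refl R X)).toEquiv.trans
        (LinearMap.coprodEquiv R).symm.toEquiv
    have h1 : Nat.card X ^ l = Nat.card ((perpCode V) →ₗ[R] X) * Nat.card X ^ k := by
      rw [← homCard_pi (R := R) l X, Nat.card_congr e1, Nat.card_prod, homCard_pi]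
    have h2 : Nat.card X ^ l = Nat.card X ^ (l - k) * Nat.card X ^ k := by
      rw [← pow_add, Nat.sub_add_cancel hkl]
    have h3 : Nat.card ((perpCode V) →ₗ[R] X) * Nat.card X ^ k =
        Nat.card X ^ (l - k) * Nat.card X ^ k := by rw [← h1, ← h2]
    have h4 := Nat.eq_of_mul_eq_mul_right (pow_pos Nat.card_pos k) h3
    rw [h4, homCard_pi]
  obtain ⟨e⟩ := linearEquiv_of_homCard_eq (perpCode V) (Fin (l - k) → R) hhom
  exact Module.Free.of_equiv e.symm

private lemma perp_free_of_free {R : Type*} [CommRing R] [Fintype R] [Nontrivial R]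
    (hFrob : IsFrobenius R) {l : ℕ} (V : Submodule R (Fin l → R)) [Module.Free R V] :
    Module.Free R (perpCode V) := by
  have b0 := Module.Free.chooseBasis R V
  exact perp_free_aux hFrob V
    (b0.reindex (Fintype.equivFin (Module.Free.ChooseBasisIndex R ↥V)))

end Main

theorem stmt6 [CommRing R] [Fintype R] (hFrob : IsFrobenius R) {l : ℕ}
    (V : Submodule R (Fin l → R)) :
    Module.Free R V ↔ Module.Free R (perpCode V) := by
  rcases subsingleton_or_nontrivial R with hR | hR
  · exact iff_of_true inferInstance inferInstance
  · constructor
    · intro h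
      exact perp_free_of_free hFrob V
    · intro h
      have := perp_free_of_free hFrob (perpCode V)
      rwa [hFrob l V] at this
end

section
/- Let R be a finite commutative Frobenius ring, C₁, …, C_m self-orthogonal linear codes of length n over R, and A a quasi-orthogonal m × l matrix over R (i.e., AAᵀ is diagonal with unit diagonal entries). Then the matrix product code C = [C₁,…,C_m]A is self-orthogonal, i.e., C ⊆ C^⊥ with respect to the Euclidean inner product on length-nl words. -/
open Matrix BigOperators

variable {R : Type*}

theorem swap4 {R : Type*} [AddCommMonoid R] {a b c d : ℕ}
    (f : Fin a → Fin b → Fin c → Fin d → R) :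
    ∑ i, ∑ k, ∑ j, ∑ j', f i k j j' = ∑ j, ∑ j', ∑ i, ∑ k, f i k j j' := by
  have h : ∑ p : Fin a × Fin b, ∑ q : Fin c × Fin d, f p.1 p.2 q.1 q.2
      = ∑ q : Fin c × Fin d, ∑ p : Fin a × Fin b, f p.1 p.2 q.1 q.2 := Finset.sum_comm
  simpa [Fintype.sum_prod_type] using h

theorem stmt13 [CommRing R] [Fintype R] (hFrob : IsFrobenius R)
    {n m l : ℕ} (hml : m ≤ l)
    (C : Fin m → Submodule R (Fin n → R))
    (hso : ∀ j, ∀ x ∈ C j, ∀ y ∈ C j, x ⬝ᵥ y = 0)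
    (A : Matrix (Fin m) (Fin l) R)
    (hqo1 : ∀ i j, i ≠ j → A i ⬝ᵥ A j = 0)
    (hqo2 : ∀ i, IsUnit (A i ⬝ᵥ A i)) :
    MPC (fun j => (C j : Set (Fin n → R))) A ⊆ dualM (MPC (fun j => (C j : Set (Fin n → R))) A) := by
  rintro x ⟨c, hc, rfl⟩ y ⟨d, hd, rfl⟩
  have key : ∀ j j' : Fin m, (∑ i, c j i * d j' i) * (∑ k, A j k * A j' k) = 0 := by
    intro j j'
    by_cases h : j = j'
    · subst h
      have : (∑ i, c j i * d j i) = 0 := hso j (c j) (hc j) (d j) (hd j)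
      rw [this, zero_mul]
    · have : (∑ k, A j k * A j' k) = 0 := hqo1 j j' h
      rw [this, mul_zero]
  calc ∑ i, ∑ k, (Matrix.of fun i k => ∑ j, c j i * A j k) i k *
        (Matrix.of fun i k => ∑ j, d j i * A j k) i k
      = ∑ j, ∑ j', (∑ i, c j' i * d j i) * (∑ k, A j' k * A j k) := by
        simp only [Matrix.of_apply, Finset.sum_mul, Finset.mul_sum]
        rw [swap4 fun i k j2 j1 => c j1 i * A j1 k * (d j2 i * A j2 k)]
        refine Finset.sum_congr rfl fun j _ => Finset.sum_congr rfl fun j' _ => ?_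
        rw [Finset.sum_comm (f := fun i k => c j' i * A j' k * (d j i * A j k))]
        refine Finset.sum_congr rfl fun k _ => Finset.sum_congr rfl fun i _ => ?_
        ring
    _ = 0 := by simp [key]
end

section
/- Let R be a finite commutative Frobenius ring, and let A be an m × l matrix over R partitioned as A = (A' over A''), where A' has m' rows and A'' has m'' = m − m' rows, such that every row of A' is orthogonal to every row of A'' under the Euclidean inner product on R^l. Let C' and C'' be self-orthogonal linear codes of length n over R, and set C = [C', …, C' (m' copies), C'', …, C'' (m'' copies)]A. Then C is self-orthogonal. Moreover, if C' and C'' are self-dual and A is invertible (so m = l), then C is self-dual. -/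
open Matrix BigOperators

variable {R : Type*}

def MPC2 [CommRing R] {n l m' m'' : ℕ} (C' C'' : Set (Fin n → R))
    (A' : Matrix (Fin m') (Fin l) R) (A'' : Matrix (Fin m'') (Fin l) R) :
    Set (Matrix (Fin n) (Fin l) R) :=
  {x | ∃ (c : Fin m' → Fin n → R) (d : Fin m'' → Fin n → R),
    (∀ j, c j ∈ C') ∧ (∀ j, d j ∈ C'') ∧
    x = Matrix.of fun i t => (∑ j, c j i * A' j t) + ∑ j, d j i * A'' j t}

section Aux
variable [CommRing R] {n l m' m'' : ℕ}

lemma mem_MPC2_iff (A' : Matrix (Fin m') (Fin l) R) (A'' : Matrix (Fin m'') (Fin l) R)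
    (C' C'' : Submodule R (Fin n → R)) (x : Matrix (Fin n) (Fin l) R) :
    x ∈ MPC2 (C' : Set (Fin n → R)) (C'' : Set (Fin n → R)) A' A'' ↔
    ∃ cm : Matrix (Fin n) (Fin m' ⊕ Fin m'') R,
      (∀ j, (fun i => cm i (Sum.inl j)) ∈ C') ∧ (∀ j, (fun i => cm i (Sum.inr j)) ∈ C'') ∧
      x = cm * Matrix.fromRows A' A'' := by
  constructor
  · rintro ⟨c, d, hc, hd, rfl⟩
    refine ⟨Matrix.of fun i s => Sum.elim (fun j => c j i) (fun j => d j i) s,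
      fun j => hc j, fun j => hd j, ?_⟩
    ext i t
    simp [Matrix.mul_apply, Fintype.sum_sum_type, Matrix.fromRows_apply_inl, Matrix.fromRows_apply_inr]
  · rintro ⟨cm, h1, h2, rfl⟩
    exact ⟨fun j i => cm i (Sum.inl j), fun j i => cm i (Sum.inr j), h1, h2, by
      ext i t; simp [Matrix.mul_apply, Fintype.sum_sum_type, Matrix.fromRows_apply_inl, Matrix.fromRows_apply_inr]⟩

lemma trace_sum' (x y : Matrix (Fin n) (Fin l) R) :
    ∑ i, ∑ t, x i t * y i t = Matrix.trace (x * yᵀ) := by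
  simp [Matrix.trace, Matrix.mul_apply, Matrix.diag]

lemma trace_expand' {m : Type*} [Fintype m] (M P : Matrix m m R) :
    Matrix.trace (M * P) = ∑ s, ∑ s', M s s' * P s' s := by
  simp [Matrix.trace, Matrix.mul_apply, Matrix.diag]

lemma cross1 (A' : Matrix (Fin m') (Fin l) R) (A'' : Matrix (Fin m'') (Fin l) R)
    (horth : ∀ i j, A' i ⬝ᵥ A'' j = 0) (a : Fin m') (b : Fin m'') :
    (Matrix.fromRows A' A'' * (Matrix.fromRows A' A'')ᵀ) (Sum.inl a) (Sum.inr b) = 0 := by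
  simpa [Matrix.mul_apply, Matrix.fromRows_apply_inl, Matrix.fromRows_apply_inr, dotProduct] using horth a b

lemma cross2 (A' : Matrix (Fin m') (Fin l) R) (A'' : Matrix (Fin m'') (Fin l) R)
    (horth : ∀ i j, A' i ⬝ᵥ A'' j = 0) (b : Fin m'') (a : Fin m') :
    (Matrix.fromRows A' A'' * (Matrix.fromRows A' A'')ᵀ) (Sum.inr b) (Sum.inl a) = 0 := by
  have := horth a b
  rw [dotProduct_comm] at this
  simpa [Matrix.mul_apply, Matrix.fromRows_apply_inl, Matrix.fromRows_apply_inr, dotProduct] using this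

lemma single_mem_left (A' : Matrix (Fin m') (Fin l) R) (A'' : Matrix (Fin m'') (Fin l) R)
    (C' C'' : Submodule R (Fin n → R)) (v : Fin n → R) (hv : v ∈ C') (j' : Fin m') :
    (Matrix.of fun i t => v i * A' j' t) ∈
      MPC2 (C' : Set (Fin n → R)) (C'' : Set (Fin n → R)) A' A'' := by
  refine ⟨fun j => if j = j' then v else 0, 0, ?_, ?_, ?_⟩
  · intro j
    by_cases h : j = j' <;> simp [h, hv, C'.zero_mem]
  · intro j; simp [C''.zero_mem]
  · ext i t
    simp only [Matrix.of_apply, Pi.zero_apply, zero_mul, Finset.sum_const_zero, add_zero]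
    rw [Finset.sum_eq_single j']
    · simp
    · intro b _ hb; simp [hb]
    · intro h; exact absurd (Finset.mem_univ j') h

lemma single_mem_right (A' : Matrix (Fin m') (Fin l) R) (A'' : Matrix (Fin m'') (Fin l) R)
    (C' C'' : Submodule R (Fin n → R)) (v : Fin n → R) (hv : v ∈ C'') (j' : Fin m'') :
    (Matrix.of fun i t => v i * A'' j' t) ∈
      MPC2 (C' : Set (Fin n → R)) (C'' : Set (Fin n → R)) A' A'' := by
  refine ⟨0, fun j => if j = j' then v else 0, ?_, ?_, ?_⟩
  · intro j; simp [C'.zero_mem]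
  · intro j
    by_cases h : j = j' <;> simp [h, hv, C''.zero_mem]
  · ext i t
    simp only [Matrix.of_apply, Pi.zero_apply, zero_mul, Finset.sum_const_zero, zero_add]
    rw [Finset.sum_eq_single j']
    · simp
    · intro b _ hb; simp [hb]
    · intro h; exact absurd (Finset.mem_univ j') h

end Aux

theorem stmt18 [CommRing R] [Fintype R] (hFrob : IsFrobenius R)
    {n l m' m'' : ℕ}
    (A' : Matrix (Fin m') (Fin l) R) (A'' : Matrix (Fin m'') (Fin l) R)
    (horth : ∀ i j, A' i ⬝ᵥ A'' j = 0)
    (C' C'' : Submodule R (Fin n → R))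
    (hso' : ∀ x ∈ C', ∀ y ∈ C', x ⬝ᵥ y = 0)
    (hso'' : ∀ x ∈ C'', ∀ y ∈ C'', x ⬝ᵥ y = 0) :
    MPC2 (C' : Set (Fin n → R)) (C'' : Set (Fin n → R)) A' A'' ⊆
      dualM (MPC2 (C' : Set (Fin n → R)) (C'' : Set (Fin n → R)) A' A'') ∧
    (perpCode C' = C' → perpCode C'' = C'' →
      (∃ B : Matrix (Fin l) (Fin m' ⊕ Fin m'') R,
        Matrix.fromRows A' A'' * B = 1 ∧ B * Matrix.fromRows A' A'' = 1) →
      dualM (MPC2 (C' : Set (Fin n → R)) (C'' : Set (Fin n → R)) A' A'') =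
        MPC2 (C' : Set (Fin n → R)) (C'' : Set (Fin n → R)) A' A'') := by
  set A := Matrix.fromRows A' A'' with hA
  have part1 : MPC2 (C' : Set (Fin n → R)) (C'' : Set (Fin n → R)) A' A'' ⊆
      dualM (MPC2 (C' : Set (Fin n → R)) (C'' : Set (Fin n → R)) A' A'') := by
    intro x hx y hy
    rw [mem_MPC2_iff] at hx hy
    obtain ⟨cm, hc1, hc2, rfl⟩ := hx
    obtain ⟨dm, hd1, hd2, rfl⟩ := hy
    rw [trace_sum']
    have heq : (cm * A) * (dm * A)ᵀ = cm * ((A * Aᵀ) * dmᵀ) := by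
      rw [Matrix.transpose_mul, Matrix.mul_assoc, Matrix.mul_assoc]
    rw [heq, Matrix.trace_mul_comm, Matrix.mul_assoc (A * Aᵀ) dmᵀ cm, trace_expand']
    refine Finset.sum_eq_zero fun s _ => Finset.sum_eq_zero fun s' _ => ?_
    have hdm : ∀ a b, (dmᵀ * cm) a b = (fun i => dm i a) ⬝ᵥ (fun i => cm i b) := by
      intro a b; simp [Matrix.mul_apply, dotProduct]
    rcases s with a | a <;> rcases s' with b | b
    · rw [hdm, hso' _ (hd1 b) _ (hc1 a), mul_zero]
    · rw [hA, cross1 A' A'' horth a b, zero_mul]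
    · rw [hA, cross2 A' A'' horth a b, zero_mul]
    · rw [hdm, hso'' _ (hd2 b) _ (hc2 a), mul_zero]
  refine ⟨part1, fun hC' hC'' ⟨B, hAB, hBA⟩ => ?_⟩
  refine Set.Subset.antisymm ?_ part1
  intro x hx
  -- setup
  have hABt : Aᵀ * Bᵀ = 1 := by rw [← Matrix.transpose_mul, hBA, Matrix.transpose_one]
  have hBtAt : Bᵀ * Aᵀ = 1 := by rw [← Matrix.transpose_mul, hAB, Matrix.transpose_one]
  set M := A * Aᵀ with hM
  set N := Bᵀ * B with hN
  have hMN : M * N = 1 := by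
    rw [hM, hN, Matrix.mul_assoc, ← Matrix.mul_assoc Aᵀ, hABt, Matrix.one_mul, hAB]
  set cm := x * B with hcm
  have hx_eq : x = cm * A := by
    rw [hcm, Matrix.mul_assoc, hBA, Matrix.mul_one]
  have hU : cm * M = x * Aᵀ := by
    rw [hM, ← Matrix.mul_assoc, ← hx_eq]
  -- U columns lie in the codes
  have hUmem1 : ∀ j' : Fin m', (fun i => (x * Aᵀ) i (Sum.inl j')) ∈ C' := by
    intro j'
    rw [← hC']
    intro v hv
    have hy := hx _ (single_mem_left A' A'' C' C'' v hv j')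
    calc (fun i => (x * Aᵀ) i (Sum.inl j')) ⬝ᵥ v
        = ∑ i, (∑ t, x i t * A' j' t) * v i := by
          simp [dotProduct, Matrix.mul_apply, hA, Matrix.fromRows_apply_inl, Matrix.fromRows_apply_inr]
      _ = ∑ i, ∑ t, x i t * (Matrix.of fun i t => v i * A' j' t) i t := by
          refine Finset.sum_congr rfl fun i _ => ?_
          rw [Finset.sum_mul]
          exact Finset.sum_congr rfl fun t _ => by simp; ring
      _ = 0 := hy
  have hUmem2 : ∀ j' : Fin m'', (fun i => (x * Aᵀ) i (Sum.inr j')) ∈ C'' := by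
    intro j'
    rw [← hC'']
    intro v hv
    have hy := hx _ (single_mem_right A' A'' C' C'' v hv j')
    calc (fun i => (x * Aᵀ) i (Sum.inr j')) ⬝ᵥ v
        = ∑ i, (∑ t, x i t * A'' j' t) * v i := by
          simp [dotProduct, Matrix.mul_apply, hA, Matrix.fromRows_apply_inl, Matrix.fromRows_apply_inr]
      _ = ∑ i, ∑ t, x i t * (Matrix.of fun i t => v i * A'' j' t) i t := by
          refine Finset.sum_congr rfl fun i _ => ?_
          rw [Finset.sum_mul]
          exact Finset.sum_congr rfl fun t _ => by simp; ring
      _ = 0 := hy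
  -- Gram block inverses
  have hGH1 : ∀ a b : Fin m',
      ∑ j, M (Sum.inl a) (Sum.inl j) * N (Sum.inl j) (Sum.inl b)
        = if a = b then (1 : R) else 0 := by
    intro a b
    have h := congrFun (congrFun hMN (Sum.inl a)) (Sum.inl b)
    rw [Matrix.mul_apply] at h
    rw [Fintype.sum_sum_type] at h
    have hz : ∀ j : Fin m'', M (Sum.inl a) (Sum.inr j) * N (Sum.inr j) (Sum.inl b) = 0 := by
      intro j; rw [hM, hA, cross1 A' A'' horth a j, zero_mul]
    rw [Finset.sum_eq_zero fun j _ => hz j, add_zero] at h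
    rw [h, Matrix.one_apply]
    simp
  have hGH2 : ∀ a b : Fin m'',
      ∑ j, M (Sum.inr a) (Sum.inr j) * N (Sum.inr j) (Sum.inr b)
        = if a = b then (1 : R) else 0 := by
    intro a b
    have h := congrFun (congrFun hMN (Sum.inr a)) (Sum.inr b)
    rw [Matrix.mul_apply] at h
    rw [Fintype.sum_sum_type] at h
    have hz : ∀ j : Fin m', M (Sum.inr a) (Sum.inl j) * N (Sum.inl j) (Sum.inr b) = 0 := by
      intro j; rw [hM, hA, cross2 A' A'' horth a j, zero_mul]
    rw [Finset.sum_eq_zero fun j _ => hz j, zero_add] at h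
    rw [h, Matrix.one_apply]
    simp
  -- U in terms of cm columns
  have hu1 : ∀ (i : Fin n) (j' : Fin m'),
      (x * Aᵀ) i (Sum.inl j') = ∑ j, cm i (Sum.inl j) * M (Sum.inl j) (Sum.inl j') := by
    intro i j'
    have h := congrFun (congrFun hU i) (Sum.inl j')
    rw [Matrix.mul_apply, Fintype.sum_sum_type] at h
    have hz : ∀ j : Fin m'', cm i (Sum.inr j) * M (Sum.inr j) (Sum.inl j') = 0 := by
      intro j; rw [hM, hA, cross2 A' A'' horth j j', mul_zero]
    rw [Finset.sum_eq_zero fun j _ => hz j, add_zero] at h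
    exact h.symm
  have hu2 : ∀ (i : Fin n) (j' : Fin m''),
      (x * Aᵀ) i (Sum.inr j') = ∑ j, cm i (Sum.inr j) * M (Sum.inr j) (Sum.inr j') := by
    intro i j'
    have h := congrFun (congrFun hU i) (Sum.inr j')
    rw [Matrix.mul_apply, Fintype.sum_sum_type] at h
    have hz : ∀ j : Fin m', cm i (Sum.inl j) * M (Sum.inl j) (Sum.inr j') = 0 := by
      intro j; rw [hM, hA, cross1 A' A'' horth j j', mul_zero]
    rw [Finset.sum_eq_zero fun j _ => hz j, zero_add] at h
    exact h.symm
  -- columns of cm lie in the codes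
  have hcol1 : ∀ j : Fin m', (fun i => cm i (Sum.inl j)) ∈ C' := by
    intro j
    have hkey : (fun i => cm i (Sum.inl j))
        = ∑ j' : Fin m', N (Sum.inl j') (Sum.inl j) • (fun i => (x * Aᵀ) i (Sum.inl j')) := by
      funext i
      rw [Finset.sum_apply]
      simp only [Pi.smul_apply, smul_eq_mul]
      calc cm i (Sum.inl j)
          = ∑ j2, cm i (Sum.inl j2) * (if j2 = j then (1:R) else 0) := by
            simp [mul_ite, Finset.sum_ite_eq']
        _ = ∑ j2, cm i (Sum.inl j2) *
              (∑ j', M (Sum.inl j2) (Sum.inl j') * N (Sum.inl j') (Sum.inl j)) := by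
            exact Finset.sum_congr rfl fun j2 _ => by rw [hGH1]
        _ = ∑ j', (∑ j2, cm i (Sum.inl j2) * M (Sum.inl j2) (Sum.inl j')) *
              N (Sum.inl j') (Sum.inl j) := by
            simp only [Finset.mul_sum, Finset.sum_mul]
            rw [Finset.sum_comm]
            exact Finset.sum_congr rfl fun j' _ => Finset.sum_congr rfl fun j2 _ => by ring
        _ = ∑ j', N (Sum.inl j') (Sum.inl j) * (x * Aᵀ) i (Sum.inl j') := by
            exact Finset.sum_congr rfl fun j' _ => by rw [← hu1 i j']; ring
    rw [hkey]
    exact Submodule.sum_mem _ fun j' _ => Submodule.smul_mem _ _ (hUmem1 j')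
  have hcol2 : ∀ j : Fin m'', (fun i => cm i (Sum.inr j)) ∈ C'' := by
    intro j
    have hkey : (fun i => cm i (Sum.inr j))
        = ∑ j' : Fin m'', N (Sum.inr j') (Sum.inr j) • (fun i => (x * Aᵀ) i (Sum.inr j')) := by
      funext i
      rw [Finset.sum_apply]
      simp only [Pi.smul_apply, smul_eq_mul]
      calc cm i (Sum.inr j)
          = ∑ j2, cm i (Sum.inr j2) * (if j2 = j then (1:R) else 0) := by
            simp [mul_ite, Finset.sum_ite_eq']
        _ = ∑ j2, cm i (Sum.inr j2) *
              (∑ j', M (Sum.inr j2) (Sum.inr j') * N (Sum.inr j') (Sum.inr j)) := by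
            exact Finset.sum_congr rfl fun j2 _ => by rw [hGH2]
        _ = ∑ j', (∑ j2, cm i (Sum.inr j2) * M (Sum.inr j2) (Sum.inr j')) *
              N (Sum.inr j') (Sum.inr j) := by
            simp only [Finset.mul_sum, Finset.sum_mul]
            rw [Finset.sum_comm]
            exact Finset.sum_congr rfl fun j' _ => Finset.sum_congr rfl fun j2 _ => by ring
        _ = ∑ j', N (Sum.inr j') (Sum.inr j) * (x * Aᵀ) i (Sum.inr j') := by
            exact Finset.sum_congr rfl fun j' _ => by rw [← hu2 i j']; ring
    rw [hkey]
    exact Submodule.sum_mem _ fun j' _ => Submodule.smul_mem _ _ (hUmem2 j')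
  exact (mem_MPC2_iff A' A'' C' C'' x).2 ⟨cm, hcol1, hcol2, hx_eq⟩
end
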